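/- arXiv:2412.17125 — 8 statements merged into one kernel-verified Lean document; each statement's English description precedes it below -/
import Mathlib

section
/- If f(z) = z + Δ(z) with Δ(z) = a z^{q+1} + O(z^{q+2}), a ≠ 0, q ≥ 1, then the residue at 0 of the Buff form ω_f(z) dz = (f'(z)−1)/((f(z)−z) Log f'(z)) dz equals the résidu itératif of f at 0, namely (q+1)/2 − ι(f,0). -/
open Complex Metric Filter Topology Set Asymptotics

private lemma analyticAt_dslope_zero' {g : ℂ → ℂ} (hg : AnalyticAt ℂ g 0) :
    AnalyticAt ℂ (dslope g 0) 0 := by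
  obtain ⟨p, hp⟩ := hg
  exact ⟨p.fslope, hp.has_fpower_series_dslope_fslope⟩

private lemma analyticAt_deriv' {g : ℂ → ℂ} {x : ℂ} (hg : AnalyticAt ℂ g x) :
    AnalyticAt ℂ (deriv g) x := by
  obtain ⟨s, hs, hga⟩ := hg.exists_mem_nhds_analyticOnNhd
  exact hga.deriv x (mem_of_mem_nhds hs)

private lemma factor_pow' (n : ℕ) : ∀ g : ℂ → ℂ, AnalyticAt ℂ g 0 →
    (g =O[𝓝 (0:ℂ)] fun z => z ^ n) →
    ∃ h : ℂ → ℂ, AnalyticAt ℂ h 0 ∧ ∀ z, g z = z ^ n * h z := by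
  induction n with
  | zero => exact fun g hg _ => ⟨g, hg, fun z => by simp⟩
  | succ n ih =>
    intro g hg hO
    obtain ⟨C, hC⟩ := Asymptotics.isBigO_iff.mp hO
    have hg0 : g 0 = 0 := by
      have h := hC.self_of_nhds
      rw [zero_pow (Nat.succ_ne_zero n), norm_zero, mul_zero] at h
      exact norm_le_zero_iff.mp h
    have hfac : ∀ z, g z = z * dslope g 0 z := by
      intro z
      have h := sub_smul_dslope g 0 z
      rw [sub_zero, hg0, sub_zero, smul_eq_mul] at h
      exact h.symm
    have h1an := analyticAt_dslope_zero' hg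
    have hpb : ∀ᶠ z in 𝓝[≠] (0:ℂ), ‖dslope g 0 z‖ ≤ C * ‖z‖ ^ n := by
      filter_upwards [eventually_nhdsWithin_of_eventually_nhds hC, self_mem_nhdsWithin]
        with z hz hz0
      rw [hfac z, norm_mul, norm_pow, pow_succ] at hz
      have hzpos : 0 < ‖z‖ := norm_pos_iff.mpr hz0
      have h2 : ‖z‖ * ‖dslope g 0 z‖ ≤ ‖z‖ * (C * ‖z‖ ^ n) := by
        calc ‖z‖ * ‖dslope g 0 z‖ ≤ C * (‖z‖ ^ n * ‖z‖) := hz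
          _ = ‖z‖ * (C * ‖z‖ ^ n) := by ring
      exact le_of_mul_le_mul_left h2 hzpos
    have h0b : ‖dslope g 0 0‖ ≤ C * ‖(0:ℂ)‖ ^ n := by
      have l1 : Tendsto (fun z => ‖dslope g 0 z‖) (𝓝[≠] (0:ℂ)) (𝓝 ‖dslope g 0 0‖) :=
        (h1an.continuousAt.norm.tendsto).mono_left nhdsWithin_le_nhds
      have l2 : Tendsto (fun z : ℂ => C * ‖z‖ ^ n) (𝓝[≠] (0:ℂ)) (𝓝 (C * ‖(0:ℂ)‖ ^ n)) :=
        ((continuous_const.mul (continuous_norm.pow n)).tendsto 0).mono_left nhdsWithin_le_nhds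
      exact le_of_tendsto_of_tendsto l1 l2 hpb
    have hb : (dslope g 0) =O[𝓝 (0:ℂ)] fun z => z ^ n := by
      rw [Asymptotics.isBigO_iff]
      refine ⟨C, ?_⟩
      have hpb' : ∀ᶠ z in 𝓝 (0:ℂ), z ≠ 0 → ‖dslope g 0 z‖ ≤ C * ‖z‖ ^ n := by
        rw [eventually_nhdsWithin_iff] at hpb
        filter_upwards [hpb] with z hz hz0
        exact hz hz0
      filter_upwards [hpb'] with z hz
      rw [norm_pow]
      rcases eq_or_ne z 0 with rfl | hz0
      · exact h0b
      · exact hz hz0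
    obtain ⟨h, hhan, hh⟩ := ih (dslope g 0) h1an hb
    exact ⟨h, hhan, fun z => by rw [hfac z, hh z]; ring⟩

/-- `ellC w = log (1 + w) / w`, extended analytically through `w = 0`. -/
private noncomputable def ellC : ℂ → ℂ := dslope (fun w => Complex.log (1 + w)) 0

/-- `mC w = (ellC w - 1) / w`, extended analytically through `w = 0`. -/
private noncomputable def mC : ℂ → ℂ := dslope ellC 0

private lemma lg_analyticAt : AnalyticAt ℂ (fun w : ℂ => Complex.log (1 + w)) 0 := by
  have h1 : AnalyticAt ℂ (fun w : ℂ => 1 + w) 0 := analyticAt_const.add analyticAt_id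
  have h2 : AnalyticAt ℂ Complex.log ((1:ℂ) + 0) := by
    rw [add_zero]; exact analyticAt_clog one_mem_slitPlane
  exact h2.comp h1

private lemma ellC_analyticAt : AnalyticAt ℂ ellC 0 := analyticAt_dslope_zero' lg_analyticAt
private lemma mC_analyticAt : AnalyticAt ℂ mC 0 := analyticAt_dslope_zero' ellC_analyticAt

private lemma lg_eq (w : ℂ) : Complex.log (1 + w) = w * ellC w := by
  have h := sub_smul_dslope (fun w => Complex.log (1 + w)) 0 w
  rw [sub_zero, smul_eq_mul] at h
  simpa [ellC, Complex.log_one] using h.symm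

private lemma hasDerivAt_lg {w : ℂ} (hw : 1 + w ∈ slitPlane) :
    HasDerivAt (fun w : ℂ => Complex.log (1 + w)) (1 + w)⁻¹ w := by
  have h := (Complex.hasDerivAt_log hw).comp w ((hasDerivAt_id w).const_add 1)
  exact h.congr_deriv (mul_one _)

private lemma ellC_zero : ellC 0 = 1 := by
  rw [ellC, dslope_same]
  have h := hasDerivAt_lg (w := 0) (by simpa using one_mem_slitPlane)
  simpa using h.deriv

private lemma ellC_eq (w : ℂ) : ellC w = 1 + w * mC w := by
  have h := sub_smul_dslope ellC 0 w
  rw [sub_zero, smul_eq_mul, ellC_zero] at h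
  have h2 : mC = dslope ellC 0 := rfl
  rw [h2]
  linear_combination -h

private lemma deriv_ellC_zero : deriv ellC 0 = -(1/2) := by
  have hslit : ∀ᶠ w in 𝓝 (0:ℂ), 1 + w ∈ slitPlane := by
    have hc : ContinuousAt (fun w : ℂ => 1 + w) 0 := by fun_prop
    have h1 : (1:ℂ) + 0 ∈ slitPlane := by simpa using one_mem_slitPlane
    exact hc.eventually_mem (isOpen_slitPlane.mem_nhds h1)
  have key : (fun w : ℂ => ((1:ℂ) + w)⁻¹) =ᶠ[𝓝 (0:ℂ)]
      fun w => ellC w + w * deriv ellC w := by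
    filter_upwards [ellC_analyticAt.eventually_analyticAt, hslit] with w hw hwslit
    have h1 : HasDerivAt (fun w : ℂ => Complex.log (1 + w)) ((1+w)⁻¹) w := hasDerivAt_lg hwslit
    have h2 : HasDerivAt (fun w : ℂ => w * ellC w) (1 * ellC w + w * deriv ellC w) w :=
      (hasDerivAt_id w).mul hw.differentiableAt.hasDerivAt
    have h3 : HasDerivAt (fun w : ℂ => w * ellC w) ((1+w)⁻¹) w := by
      have he : (fun w : ℂ => w * ellC w) = fun w => Complex.log (1 + w) :=
        funext fun w => (lg_eq w).symm
      rw [he]; exact h1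
    have h4 := h2.unique h3
    rw [one_mul] at h4
    exact h4.symm
  have hd1 : deriv (fun w : ℂ => ((1:ℂ) + w)⁻¹) 0 = -1 := by
    have hc : HasDerivAt (fun w : ℂ => (1:ℂ) + w) 1 0 := (hasDerivAt_id 0).const_add 1
    have h := hc.inv (by norm_num)
    rw [show (fun w : ℂ => ((1:ℂ) + w)⁻¹) = (fun w : ℂ => (1:ℂ) + w)⁻¹ from rfl, h.deriv]
    norm_num
  have hd2 : deriv (fun w : ℂ => ellC w + w * deriv ellC w) 0 = 2 * deriv ellC 0 := by
    have hell : HasDerivAt ellC (deriv ellC 0) 0 :=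
      ellC_analyticAt.differentiableAt.hasDerivAt
    have hde : HasDerivAt (deriv ellC) (deriv (deriv ellC) 0) 0 :=
      (analyticAt_deriv' ellC_analyticAt).differentiableAt.hasDerivAt
    have h2 : HasDerivAt (fun w : ℂ => w * deriv ellC w)
        (1 * deriv ellC 0 + 0 * deriv (deriv ellC) 0) 0 := (hasDerivAt_id 0).mul hde
    have h3 := (hell.add h2).deriv
    rw [show (fun w : ℂ => ellC w + w * deriv ellC w) = ellC + (fun w : ℂ => w * deriv ellC w)
      from rfl, h3]; ring
  have h := key.deriv_eq
  rw [hd1, hd2] at h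
  linear_combination -h / 2

private lemma mC_zero : mC 0 = -(1/2) := by
  rw [mC, dslope_same, deriv_ellC_zero]

private lemma key_identity' (z Az Bz Mz Ez : ℂ) (q : ℕ) (hz : z ≠ 0) (hA : Az ≠ 0)
    (hB : Bz ≠ 0) (hE : Ez ≠ 0) (hrel : Ez = 1 + z ^ q * Bz * Mz) :
    z ^ q * Bz / (z ^ (q+1) * Az * (z ^ q * Bz * Ez))
      = (z ^ (q+1) * Az)⁻¹
        - ((Bz * Mz / (Az * Ez) - -(((q:ℂ)+1)/2)) / z - ((q:ℂ)+1)/2 * z⁻¹) := by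
  have hzp : z ^ q ≠ 0 := pow_ne_zero _ hz
  have hzp1 : z ^ (q+1) ≠ 0 := pow_ne_zero _ hz
  have h1 : z ^ (q+1) * Az * (z ^ q * Bz * Ez) ≠ 0 :=
    mul_ne_zero (mul_ne_zero hzp1 hA) (mul_ne_zero (mul_ne_zero hzp hB) hE)
  have h2 : z ^ (q+1) * Az * Ez ≠ 0 := mul_ne_zero (mul_ne_zero hzp1 hA) hE
  have hd2 : Az * Ez * z ≠ 0 := mul_ne_zero (mul_ne_zero hA hE) hz
  have hd1 : z ^ (q+1) * Az ≠ 0 := mul_ne_zero hzp1 hA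
  have s1 : (Bz * Mz / (Az * Ez) - -(((q:ℂ)+1)/2)) / z - ((q:ℂ)+1)/2 * z⁻¹
      = Bz * Mz / (Az * Ez * z) := by
    rw [sub_neg_eq_add, add_div, div_div]
    rw [div_eq_mul_inv (((q:ℂ)+1)/2) z]
    ring
  rw [s1]
  have step1 : z ^ q * Bz / (z ^ (q+1) * Az * (z ^ q * Bz * Ez))
      = 1 / (z ^ (q+1) * Az * Ez) := by
    rw [div_eq_div_iff h1 h2]; ring
  rw [step1, inv_eq_one_div, div_sub_div 1 (Bz*Mz) hd1 hd2,
    div_eq_div_iff h2 (mul_ne_zero hd1 hd2)]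
  linear_combination (-(z^2*z^q*Az^2*Ez)) * hrel

/-- if `f(z) = z + a z^(q+1) + O(z^(q+2))` with `a ≠ 0`, then the residue
at `0` of the Buff form `(f'(z)-1)/((f(z)-z) Log f'(z)) dz` equals the résidu itératif
`(q+1)/2 - ι(f,0)`, where `ι(f,0)` is the residue of `dz/(z - f z)` at `0`. -/
theorem buff_form_residue_parabolic
    (f : ℂ → ℂ) (a : ℂ) (q : ℕ) (hq : 1 ≤ q) (ha : a ≠ 0)
    (U : Set ℂ) (hU : IsOpen U) (h0 : (0:ℂ) ∈ U) (hf : DifferentiableOn ℂ f U)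
    (hexp : (fun z => f z - z - a * z^(q+1)) =O[𝓝 0] fun z => z^(q+2)) :
    ∀ᶠ r in 𝓝[>] (0:ℝ),
      (2 * Real.pi * Complex.I : ℂ)⁻¹ •
        (∮ z in C(0, r), (deriv f z - 1) / ((f z - z) * Complex.log (deriv f z)))
        = ((q : ℂ) + 1)/2
          - (2 * Real.pi * Complex.I : ℂ)⁻¹ • (∮ z in C(0, r), (z - f z)⁻¹) := by
  have hfa : AnalyticOnNhd ℂ f U := hf.analyticOnNhd hU
  have hf0 : AnalyticAt ℂ f 0 := hfa 0 h0
  have hgan : AnalyticAt ℂ (fun z => f z - z - a * z ^ (q+1)) 0 :=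
    (hf0.sub analyticAt_id).sub (analyticAt_const.mul (analyticAt_id.pow _))
  obtain ⟨h, hhan, hh⟩ := factor_pow' (q+2) _ hgan hexp
  set A : ℂ → ℂ := fun z => a + z * h z with hAdef
  have hAan : AnalyticAt ℂ A 0 := analyticAt_const.add (analyticAt_id.mul hhan)
  have hA0 : A 0 = a := by simp [hAdef]
  have hΔ : ∀ z, f z - z = z ^ (q+1) * A z := by
    intro z
    have h1 := hh z
    have h2 : f z - z = a * z ^ (q+1) + z ^ (q+2) * h z := by linear_combination h1
    rw [h2]
    simp only [hAdef]
    ring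
  set B : ℂ → ℂ := fun z => ((q:ℂ)+1) * A z + z * deriv A z with hBdef
  have hAd : AnalyticAt ℂ (deriv A) 0 := analyticAt_deriv' hAan
  have hBan : AnalyticAt ℂ B 0 := (analyticAt_const.mul hAan).add (analyticAt_id.mul hAd)
  have hB0 : B 0 = ((q:ℂ)+1) * a := by simp [hBdef, hA0]
  have hderiv : ∀ᶠ z in 𝓝 (0:ℂ), deriv f z - 1 = z ^ q * B z := by
    filter_upwards [hAan.eventually_analyticAt, hU.eventually_mem h0] with z hAz hzU
    have hfd : DifferentiableAt ℂ f z := (hfa z hzU).differentiableAt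
    have h1 : HasDerivAt (fun z => f z - z) (deriv f z - 1) z :=
      hfd.hasDerivAt.sub (hasDerivAt_id z)
    have h2 : HasDerivAt (fun z : ℂ => z ^ (q+1) * A z)
        ((((q+1 : ℕ)) : ℂ) * z ^ q * A z + z ^ (q+1) * deriv A z) z := by
      have hp : HasDerivAt (fun z : ℂ => z ^ (q+1)) ((((q+1:ℕ)):ℂ) * z ^ q) z := by
        simpa using hasDerivAt_pow (q+1) z
      exact hp.mul hAz.differentiableAt.hasDerivAt
    have heq : (fun z => f z - z) = fun z => z ^ (q+1) * A z := funext hΔ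
    rw [heq] at h1
    have h3 := h1.unique h2
    rw [h3]
    simp only [hBdef]
    push_cast
    ring
  have hwan : AnalyticAt ℂ (fun z : ℂ => z ^ q * B z) 0 := (analyticAt_id.pow q).mul hBan
  have hw0 : ((0:ℂ)) ^ q * B 0 = 0 := by
    rw [zero_pow (by omega : q ≠ 0), zero_mul]
  have hEan : AnalyticAt ℂ (fun z : ℂ => ellC (z ^ q * B z)) 0 := by
    have h1 : AnalyticAt ℂ ellC ((fun z : ℂ => z ^ q * B z) 0) := by
      show AnalyticAt ℂ ellC ((0:ℂ) ^ q * B 0)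
      rw [hw0]; exact ellC_analyticAt
    exact AnalyticAt.comp (f := fun z : ℂ => z ^ q * B z) h1 hwan
  have hMan : AnalyticAt ℂ (fun z : ℂ => mC (z ^ q * B z)) 0 := by
    have h1 : AnalyticAt ℂ mC ((fun z : ℂ => z ^ q * B z) 0) := by
      show AnalyticAt ℂ mC ((0:ℂ) ^ q * B 0)
      rw [hw0]; exact mC_analyticAt
    exact AnalyticAt.comp (f := fun z : ℂ => z ^ q * B z) h1 hwan
  have hE0 : ellC ((0:ℂ) ^ q * B 0) = 1 := by rw [hw0, ellC_zero]
  have hM0 : mC ((0:ℂ) ^ q * B 0) = -(1/2) := by rw [hw0, mC_zero]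
  set G : ℂ → ℂ := fun z => B z * mC (z ^ q * B z) / (A z * ellC (z ^ q * B z)) with hGdef
  have hABE0 : A 0 * ellC ((0:ℂ) ^ q * B 0) ≠ 0 := by
    rw [hA0, hE0, mul_one]; exact ha
  have hGan : AnalyticAt ℂ G 0 := (hBan.mul hMan).div (hAan.mul hEan) hABE0
  have hG0 : G 0 = -(((q:ℂ)+1)/2) := by
    have h1 : G 0 = B 0 * mC ((0:ℂ) ^ q * B 0) / (A 0 * ellC ((0:ℂ) ^ q * B 0)) := rfl
    rw [h1, hM0, hE0, hB0, hA0]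
    field_simp [ha]
  have hAne : ∀ᶠ z in 𝓝 (0:ℂ), A z ≠ 0 :=
    hAan.continuousAt.eventually_ne (by rw [hA0]; exact ha)
  have hBne : ∀ᶠ z in 𝓝 (0:ℂ), B z ≠ 0 :=
    hBan.continuousAt.eventually_ne
      (by rw [hB0]; exact mul_ne_zero (Nat.cast_add_one_ne_zero q) ha)
  have hEne : ∀ᶠ z in 𝓝 (0:ℂ), ellC (z ^ q * B z) ≠ 0 :=
    hEan.continuousAt.eventually_ne (by
      show ellC ((0:ℂ) ^ q * B 0) ≠ 0
      rw [hw0, ellC_zero]; exact one_ne_zero)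
  have keyid : ∀ᶠ z in 𝓝 (0:ℂ), z ≠ 0 →
      (deriv f z - 1) / ((f z - z) * Complex.log (deriv f z))
        = (f z - z)⁻¹ - (dslope G 0 z - ((q:ℂ)+1)/2 * z⁻¹) := by
    filter_upwards [hderiv, hAne, hBne, hEne] with z e2 hAz hBz hEz hz
    have e1 : f z - z = z ^ (q+1) * A z := hΔ z
    have e2' : deriv f z = 1 + z ^ q * B z := by linear_combination e2
    have e3 : Complex.log (deriv f z) = z ^ q * B z * ellC (z ^ q * B z) := by
      rw [e2', lg_eq]
    have e5 : dslope G 0 z = (G z - G 0) / z := by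
      rw [dslope_of_ne _ hz, slope_def_field, sub_zero]
    have e6 : G z = B z * mC (z ^ q * B z) / (A z * ellC (z ^ q * B z)) := rfl
    rw [e2, e1, e3, e5, e6, hG0]
    exact key_identity' z (A z) (B z) (mC (z ^ q * B z)) (ellC (z ^ q * B z)) q hz hAz hBz
      hEz (ellC_eq _)
  have hall : ∀ᶠ z in 𝓝 (0:ℂ), (z ≠ 0 →
      (deriv f z - 1) / ((f z - z) * Complex.log (deriv f z))
        = (f z - z)⁻¹ - (dslope G 0 z - ((q:ℂ)+1)/2 * z⁻¹)) ∧
      AnalyticAt ℂ G z ∧ z ∈ U ∧ A z ≠ 0 := by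
    filter_upwards [keyid, hGan.eventually_analyticAt, hU.eventually_mem h0, hAne]
      with z h1 h2 h3 h4
    exact ⟨h1, h2, h3, h4⟩
  obtain ⟨ε, hε, hball⟩ := Metric.eventually_nhds_iff_ball.mp hall
  filter_upwards [Ioo_mem_nhdsGT_of_mem (Set.left_mem_Ico.mpr hε)] with r hr
  obtain ⟨hr0, hrε⟩ := hr
  have hsub : sphere (0:ℂ) r ⊆ ball (0:ℂ) ε := fun z hz => by
    rw [mem_sphere_zero_iff_norm] at hz
    rw [mem_ball_zero_iff, hz]
    exact hrε
  have hzne : ∀ z ∈ sphere (0:ℂ) r, z ≠ 0 := fun z hz => by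
    rw [mem_sphere_zero_iff_norm] at hz
    intro h0'
    rw [h0', norm_zero] at hz
    exact hr0.ne hz
  have hcongr : (∮ z in C(0, r), (deriv f z - 1) / ((f z - z) * Complex.log (deriv f z)))
      = ∮ z in C(0, r), ((f z - z)⁻¹ - (dslope G 0 z - ((q:ℂ)+1)/2 * z⁻¹)) := by
    apply circleIntegral.integral_congr hr0.le
    intro z hz
    exact (hball z (hsub hz)).1 (hzne z hz)
  have hUsub : sphere (0:ℂ) r ⊆ U := fun z hz => (hball z (hsub hz)).2.2.1
  have hΔcont : ContinuousOn (fun z => f z - z) (sphere (0:ℂ) r) :=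
    (hf.continuousOn.mono hUsub).sub continuousOn_id
  have hΔne : ∀ z ∈ sphere (0:ℂ) r, f z - z ≠ 0 := fun z hz => by
    rw [hΔ z]
    exact mul_ne_zero (pow_ne_zero _ (hzne z hz)) (hball z (hsub hz)).2.2.2
  have hi1 : CircleIntegrable (fun z => (f z - z)⁻¹) 0 r :=
    (hΔcont.inv₀ hΔne).circleIntegrable hr0.le
  have hi2 : CircleIntegrable (fun z : ℂ => ((q:ℂ)+1)/2 * z⁻¹) 0 r := by
    apply ContinuousOn.circleIntegrable hr0.le
    exact continuousOn_const.mul (continuousOn_id.inv₀ hzne)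
  have hdG : DifferentiableOn ℂ (dslope G 0) (ball (0:ℂ) ε) := by
    rw [Complex.differentiableOn_dslope (ball_mem_nhds _ hε)]
    exact fun z hz => ((hball z hz).2.1).differentiableAt.differentiableWithinAt
  have hi3a : CircleIntegrable (dslope G 0) 0 r :=
    ((hdG.continuousOn).mono hsub).circleIntegrable hr0.le
  have hi3 : CircleIntegrable (fun z => dslope G 0 z - ((q:ℂ)+1)/2 * z⁻¹) 0 r :=
    hi3a.sub hi2
  have hI3 : (∮ z in C(0, r), dslope G 0 z) = 0 := by
    apply Complex.circleIntegral_eq_zero_of_differentiable_on_off_countable hr0.le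
      Set.countable_empty
    · exact hdG.continuousOn.mono (closedBall_subset_ball hrε)
    · intro z hz
      have hzb : z ∈ ball (0:ℂ) ε := ball_subset_ball hrε.le hz.1
      exact (hdG z hzb).differentiableAt (isOpen_ball.mem_nhds hzb)
  have hI2 : (∮ z in C(0, r), ((q:ℂ)+1)/2 * z⁻¹)
      = ((q:ℂ)+1)/2 * (2 * Real.pi * Complex.I) := by
    have h2 : (∮ z in C(0, r), (z - 0)⁻¹) = 2 * Real.pi * Complex.I :=
      circleIntegral.integral_sub_inv_of_mem_ball (mem_ball_self hr0)
    have h3 := circleIntegral.integral_smul (((q:ℂ)+1)/2) (fun z : ℂ => (z - 0)⁻¹) 0 r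
    simp only [smul_eq_mul, sub_zero] at h2 h3
    rw [h3, h2]
  have hsplit : (∮ z in C(0, r), ((f z - z)⁻¹ - (dslope G 0 z - ((q:ℂ)+1)/2 * z⁻¹)))
      = (∮ z in C(0, r), (f z - z)⁻¹) - ((∮ z in C(0, r), dslope G 0 z)
          - ∮ z in C(0, r), ((q:ℂ)+1)/2 * z⁻¹) := by
    rw [circleIntegral.integral_sub hi1 hi3, circleIntegral.integral_sub hi3a hi2]
  have hflip : (∮ z in C(0, r), (z - f z)⁻¹) = -∮ z in C(0, r), (f z - z)⁻¹ := by
    have hc : (∮ z in C(0, r), (z - f z)⁻¹)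
        = ∮ z in C(0, r), (-1 : ℂ) • (f z - z)⁻¹ := by
      apply circleIntegral.integral_congr hr0.le
      intro z _
      simp [← inv_neg, neg_sub]
    rw [hc, circleIntegral.integral_smul]
    simp
  rw [hcongr, hsplit, hI3, hI2, hflip]
  have hpi : (2 * (Real.pi:ℂ) * Complex.I) ≠ 0 := by
    refine mul_ne_zero (mul_ne_zero two_ne_zero ?_) Complex.I_ne_zero
    exact_mod_cast Real.pi_ne_zero
  rw [smul_eq_mul, smul_eq_mul]
  field_simp
  ring
end

section
/- Let U ⊂ ℂ be convex, f holomorphic on U with Re(f'(z)) > 0 for all z ∈ U, and let z ∈ U with f(z) ∈ U and f(z) ≠ z. Then f(w) ≠ w for every w on the segment [z, f(z)]. -/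
open Complex Metric Set

lemma key_increment
    (U : Set ℂ) (hUo : IsOpen U) (hU : Convex ℝ U)
    (f : ℂ → ℂ) (hf : DifferentiableOn ℂ f U)
    (hre : ∀ w ∈ U, 0 < (deriv f w).re)
    (a b : ℂ) (ha : a ∈ U) (hb : b ∈ U) (hab : a ≠ b) :
    0 < ((f b - f a) * (starRingEnd ℂ) (b - a)).re := by
  set γ : ℝ → ℂ := fun t => a + t • (b - a) with hγ
  have hγmem : ∀ t ∈ Icc (0:ℝ) 1, γ t ∈ U := by
    intro t ht
    have hseg : (1 - t) • a + t • b ∈ U := hU ha hb (by linarith [ht.2]) ht.1 (by ring)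
    have : γ t = (1 - t) • a + t • b := by
      simp only [γ, smul_sub, sub_smul, one_smul]
      ring
    rw [this]; exact hseg
  set g : ℝ → ℝ := fun t => ((f (γ t)) * (starRingEnd ℂ) (b - a)).re with hg
  have hγderiv : ∀ t : ℝ, HasDerivAt γ (b - a) t := by
    intro t
    simpa [γ] using ((hasDerivAt_id t).smul_const (b - a)).const_add a
  have hgderiv : ∀ t : ℝ, γ t ∈ U →
      HasDerivAt g (((b - a) * deriv f (γ t) * (starRingEnd ℂ) (b - a)).re) t := by
    intro t htU
    have hfd : HasDerivAt f (deriv f (γ t)) (γ t) :=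
      (hf.differentiableAt (hUo.mem_nhds htU)).hasDerivAt
    have h1 : HasDerivAt (fun s => f (γ s)) ((b - a) • deriv f (γ t)) t :=
      hfd.scomp t (hγderiv t)
    have h2 : HasDerivAt (fun s => f (γ s) * (starRingEnd ℂ) (b - a))
        (((b - a) • deriv f (γ t)) * (starRingEnd ℂ) (b - a)) t := h1.mul_const _
    have h3 := Complex.reCLM.hasFDerivAt.comp_hasDerivAt t h2
    simpa [g, Function.comp_def, smul_eq_mul] using h3
  have hcont : ContinuousOn g (Icc 0 1) := by
    apply Complex.continuous_re.comp_continuousOn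
    exact ((hf.continuousOn.comp (by fun_prop) hγmem).mul continuousOn_const)
  have hmono : StrictMonoOn g (Icc 0 1) := by
    apply strictMonoOn_of_deriv_pos (convex_Icc 0 1) hcont
    intro t ht
    rw [interior_Icc] at ht
    have htU : γ t ∈ U := hγmem t ⟨le_of_lt ht.1, le_of_lt ht.2⟩
    rw [(hgderiv t htU).deriv]
    have : (b - a) * deriv f (γ t) * (starRingEnd ℂ) (b - a)
        = deriv f (γ t) * ((b - a) * (starRingEnd ℂ) (b - a)) := by ring
    rw [this, Complex.mul_conj]
    have hba : (0:ℝ) < Complex.normSq (b - a) := by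
      rw [Complex.normSq_pos]
      exact sub_ne_zero.mpr (Ne.symm hab)
    have := hre (γ t) htU
    simp only [Complex.mul_re, Complex.ofReal_re, Complex.ofReal_im]
    nlinarith
  have h01 : g 0 < g 1 := hmono (by simp) (by simp) one_pos
  have e0 : γ 0 = a := by simp [γ]
  have e1 : γ 1 = b := by simp [γ]
  have : ((f b - f a) * (starRingEnd ℂ) (b - a)).re = g 1 - g 0 := by
    simp [g, e0, e1, sub_mul]
  linarith [this ▸ sub_pos.mpr h01]

/-- if `U ⊂ ℂ` is convex (and open), `f` is holomorphic on `U` with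
`Re f' > 0` on `U`, `z ∈ U`, `f z ∈ U`, `f z ≠ z`, then `f` has no fixed point on the
segment `[z, f z]`. -/
theorem no_fixed_point_on_segment
    (U : Set ℂ) (hUo : IsOpen U) (hU : Convex ℝ U)
    (f : ℂ → ℂ) (hf : DifferentiableOn ℂ f U)
    (hre : ∀ w ∈ U, 0 < (deriv f w).re)
    (z : ℂ) (hz : z ∈ U) (hfz : f z ∈ U) (hne : f z ≠ z) :
    ∀ w ∈ segment ℝ z (f z), f w ≠ w := by
  intro w hw hfix
  rw [segment_eq_image] at hw
  obtain ⟨t, ht, hwt⟩ := hw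
  have hwU : w ∈ U := by
    rw [← hwt]
    exact hU hz hfz (by linarith [ht.2]) ht.1 (by ring)
  by_cases hwz : w = z
  · exact hne (hwz ▸ hfix)
  · have hkey := key_increment U hUo hU f hf hre z w hz hwU (Ne.symm hwz)
    rw [hfix] at hkey
    have hw' : w = z + (t:ℂ) * (f z - z) := by
      rw [← hwt]
      push_cast [Complex.real_smul]
      ring
    have h1 : w - f z = ((t:ℂ) - 1) * (f z - z) := by rw [hw']; ring
    have h2 : w - z = (t:ℂ) * (f z - z) := by rw [hw']; ring
    have h3 : ((t:ℂ) - 1) * (f z - z) * ((t:ℂ) * (starRingEnd ℂ) (f z - z))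
        = ((t:ℂ) - 1) * (t:ℂ) * ((f z - z) * (starRingEnd ℂ) (f z - z)) := by ring
    have : (w - f z) * (starRingEnd ℂ) (w - z)
        = ((t:ℂ) - 1) * (t:ℂ) * Complex.normSq (f z - z) := by
      rw [h1, h2, map_mul, Complex.conj_ofReal, h3, Complex.mul_conj]
    rw [this] at hkey
    have hre' : (((t:ℂ) - 1) * (t:ℂ) * (Complex.normSq (f z - z) : ℂ)).re
        = (t - 1) * t * Complex.normSq (f z - z) := by
      simp
    rw [hre'] at hkey
    nlinarith [mul_nonneg (mul_nonneg (sub_nonneg.mpr ht.2) ht.1) (Complex.normSq_nonneg (f z - z))]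
end

section
/- Under the hypotheses that U is convex, f is holomorphic on U with Re(f') > 0 on U, z ∈ U, f(z) ∈ U, and z_t = (1−t)z + t f(z) for t ∈ [0,1], one has the quantitative lower bound |f(z_a) − z_a| ≥ |f(z) − z| · (a·m + 1 − a) for all a ∈ [0,1], where m = min over [z,f(z)] of Re(f') > 0. -/
open Complex Set

open scoped ComplexConjugate

/-!
Put `v = f z - z` and `g w = f w - w`. Along the segment `s ↦ z + s v`, the real function
`s ↦ Re (g (z + s v) · conj v)` has derivative `Re (g' (z + s v)) |v|² ≥ (m - 1) |v|²`,
so at `s = a` it is at least `(1 + a (m - 1)) |v|²`, while it is at most `|g (z_a)| |v|`.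
-/

theorem hasDerivAt_comp_add_ofReal_mul {g : ℂ → ℂ} {x v : ℂ} {s : ℝ}
    (hg : DifferentiableAt ℂ g (x + s * v)) :
    HasDerivAt (fun t : ℝ => g (x + t * v)) (deriv g (x + s * v) * v) s := by
  have hline : HasDerivAt (fun w : ℂ => x + w * v) v s := by
    simpa using ((hasDerivAt_id (s : ℂ)).mul_const v).const_add x
  exact (hg.hasDerivAt.comp (s : ℂ) hline).comp_ofReal

theorem mul_normSq_le_re_sub_mul_conj {g : ℂ → ℂ} {x y : ℂ} {k : ℝ}
    (hg : ∀ w ∈ segment ℝ x y, DifferentiableAt ℂ g w)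
    (hk : ∀ w ∈ segment ℝ x y, k ≤ (deriv g w).re) {t : ℝ} (ht : t ∈ Icc (0 : ℝ) 1) :
    t * k * normSq (y - x) ≤ ((g (x + t * (y - x)) - g x) * conj (y - x)).re := by
  set v := y - x
  have hmem : ∀ s ∈ Icc (0 : ℝ) 1, x + s * v ∈ segment ℝ x y := fun s hs => by
    rw [segment_eq_image']
    exact ⟨s, hs, by simp [v, real_smul]⟩
  set φ : ℝ → ℝ := fun s => (g (x + s * v) * conj v).re
  have hφ : ∀ s ∈ Icc (0 : ℝ) 1, HasDerivAt φ ((deriv g (x + s * v)).re * normSq v) s := by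
    intro s hs
    have h : HasDerivAt φ (reCLM (deriv g (x + s * v) * v * conj v)) s :=
      reCLM.hasFDerivAt.comp_hasDerivAt s
        ((hasDerivAt_comp_add_ofReal_mul (hg _ (hmem s hs))).mul_const (conj v))
    rwa [reCLM_apply, mul_assoc, mul_conj, re_mul_ofReal] at h
  have hmono := (convex_Icc (0 : ℝ) 1).mul_sub_le_image_sub_of_le_deriv (f := φ)
    (C := k * normSq v)
    (fun s hs => (hφ s hs).continuousAt.continuousWithinAt)
    (fun s hs => (hφ s (interior_subset hs)).differentiableAt.differentiableWithinAt)
    (fun s hs => by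
      rw [(hφ s (interior_subset hs)).deriv]
      exact mul_le_mul_of_nonneg_right (hk _ (hmem s (interior_subset hs))) (normSq_nonneg v))
    0 (left_mem_Icc.2 zero_le_one) t ht ht.1
  simpa [φ, sub_mul, mul_comm, mul_left_comm, mul_assoc] using hmono

theorem mul_le_norm_of_mul_normSq_le_re_mul_conj {c : ℝ} {w v : ℂ}
    (h : c * normSq v ≤ (w * conj v).re) : ‖v‖ * c ≤ ‖w‖ := by
  rcases eq_or_ne v 0 with rfl | hv
  · simp
  have hle : c * ‖v‖ * ‖v‖ ≤ ‖w‖ * ‖v‖ := by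
    calc c * ‖v‖ * ‖v‖ = c * normSq v := by rw [normSq_eq_norm_sq]; ring
      _ ≤ (w * conj v).re := h
      _ ≤ ‖w * conj v‖ := re_le_norm _
      _ = ‖w‖ * ‖v‖ := by rw [norm_mul, norm_conj]
  rw [mul_comm]
  exact le_of_mul_le_mul_right hle (norm_pos_iff.2 hv)

theorem segment_displacement_lower_bound_general
    (U : Set ℂ) (hUo : IsOpen U) (hU : Convex ℝ U)
    (f : ℂ → ℂ) (hf : DifferentiableOn ℂ f U)
    (z : ℂ) (hz : z ∈ U) (hfz : f z ∈ U) (m : ℝ)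
    (hm : IsLeast ((fun w => (deriv f w).re) '' segment ℝ z (f z)) m) :
    ∀ a ∈ Set.Icc (0:ℝ) 1,
      ‖f z - z‖ * (a * m + 1 - a) ≤
        ‖f ((1 - (a:ℂ)) * z + (a:ℂ) * f z) - ((1 - (a:ℂ)) * z + (a:ℂ) * f z)‖ := by
  intro a ha
  have hdiff : ∀ w ∈ segment ℝ z (f z), DifferentiableAt ℂ f w := fun w hw =>
    hf.differentiableAt (hUo.mem_nhds (hU.segment_subset hz hfz hw))
  have hderiv : ∀ w ∈ segment ℝ z (f z), m - 1 ≤ (deriv (fun w => f w - w) w).re := fun w hw => by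
    rw [show deriv (fun w => f w - w) w = deriv f w - 1 from
      ((hdiff w hw).hasDerivAt.sub (hasDerivAt_id' w)).deriv, sub_re, one_re]
    linarith [hm.2 ⟨w, hw, rfl⟩]
  have hgrowth := mul_normSq_le_re_sub_mul_conj (g := fun w => f w - w)
    (fun w hw => (hdiff w hw).sub differentiableAt_id) hderiv ha
  have hza : (1 - (a:ℂ)) * z + (a:ℂ) * f z = z + a * (f z - z) := by ring
  rw [hza]
  refine mul_le_norm_of_mul_normSq_le_re_mul_conj ?_
  rw [sub_mul, mul_conj, sub_re, ofReal_re] at hgrowth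
  linarith

/-- with `z_a = (1-a) z + a f(z)` and `m = min_{[z,f z]} Re f' > 0`, one has
`|f(z_a) - z_a| ≥ |f z - z| (a m + 1 - a)` for all `a ∈ [0,1]`. -/
theorem segment_displacement_lower_bound
    (U : Set ℂ) (hUo : IsOpen U) (hU : Convex ℝ U)
    (f : ℂ → ℂ) (hf : DifferentiableOn ℂ f U)
    (hre : ∀ w ∈ U, 0 < (deriv f w).re)
    (z : ℂ) (hz : z ∈ U) (hfz : f z ∈ U) (m : ℝ)
    (hm : IsLeast ((fun w => (deriv f w).re) '' segment ℝ z (f z)) m) :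
    ∀ a ∈ Set.Icc (0:ℝ) 1,
      ‖f z - z‖ * (a * m + 1 - a) ≤
        ‖f ((1 - (a:ℂ)) * z + (a:ℂ) * f z) - ((1 - (a:ℂ)) * z + (a:ℂ) * f z)‖ :=
  segment_displacement_lower_bound_general U hUo hU f hf z hz hfz m hm
end

section
/- If p is a simple fixed point of f with multiplier λ = f'(p) ∉ {1} ∪ (−∞,0], then u_f(z) = −1 + ∫_{[z,f(z)]} ω_f(s) ds extends holomorphically to p with u_f(p) = 0. -/
open Complex Metric Filter Topology Set Asymptotics
open scoped Interval


private lemma seg_ne_zero' {lam : ℂ} (hslit : ¬(lam.re ≤ 0 ∧ lam.im = 0)) {t : ℝ}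
    (ht : t ∈ Set.Icc (0:ℝ) 1) : (1 - (t:ℂ)) + (t:ℂ) * lam ≠ 0 := by
  intro heq
  rcases eq_or_lt_of_le ht.1 with h0 | h0
  · rw [← h0] at heq; norm_num at heq
  · have hlam : lam = (((t - 1) / t : ℝ) : ℂ) := by
      have ht0 : (t:ℂ) ≠ 0 := by exact_mod_cast h0.ne'
      push_cast
      field_simp
      linear_combination heq
    apply hslit
    refine ⟨?_, by rw [hlam, Complex.ofReal_im]⟩
    rw [hlam, Complex.ofReal_re]
    apply div_nonpos_of_nonpos_of_nonneg <;> linarith [ht.2]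

private lemma seg_mem_slitPlane' {lam : ℂ} (hslit : ¬(lam.re ≤ 0 ∧ lam.im = 0)) {t : ℝ}
    (ht : t ∈ Set.Icc (0:ℝ) 1) : (1 - (t:ℂ)) + (t:ℂ) * lam ∈ Complex.slitPlane := by
  have hl : 0 < lam.re ∨ lam.im ≠ 0 := by
    by_contra hc
    push_neg at hc
    exact hslit ⟨hc.1, hc.2⟩
  rw [Complex.mem_slitPlane_iff]
  have hre : ((1 - (t:ℂ)) + (t:ℂ) * lam).re = 1 - t + t * lam.re := by simp
  have him : ((1 - (t:ℂ)) + (t:ℂ) * lam).im = t * lam.im := by simp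
  rcases hl with hl | hl
  · left
    rw [hre]
    rcases lt_or_ge t 1 with h1 | h1
    · nlinarith [mul_nonneg ht.1 hl.le]
    · have : t = 1 := le_antisymm ht.2 h1
      rw [this]; simpa using hl
  · rcases eq_or_lt_of_le ht.1 with h0 | h0
    · left; rw [hre, ← h0]; norm_num
    · right; rw [him]; exact mul_ne_zero h0.ne' hl

private noncomputable def Gaux (f : ℂ → ℂ) (p : ℂ) : ℂ → ℝ → ℂ := fun z t =>
  (dslope (fun w => f w - w) p z * (deriv f ((1 - (t:ℂ)) * z + (t:ℂ) * f z) - 1)) /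
    (((1 - (t:ℂ)) + (t:ℂ) * dslope f p z) *
      dslope (fun w => f w - w) p ((1 - (t:ℂ)) * z + (t:ℂ) * f z) *
      Complex.log (deriv f ((1 - (t:ℂ)) * z + (t:ℂ) * f z)))

set_option maxHeartbeats 1000000 in
/-- at a simple fixed point `p` with multiplier `λ ∉ {1} ∪ (-∞,0]`, the
function `u_f(z) = -1 + ∫_{[z,f z]} ω_f(s) ds` extends holomorphically to `p` with
value `0`. -/
theorem u_f_extends_simple
    (f : ℂ → ℂ) (p lam : ℂ) (U : Set ℂ) (hU : IsOpen U) (hpU : p ∈ U)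
    (hf : DifferentiableOn ℂ f U) (hre : ∀ z ∈ U, 0 < (deriv f z).re)
    (hfix : f p = p) (hmult : deriv f p = lam)
    (h1 : lam ≠ 1) (hslit : ¬(lam.re ≤ 0 ∧ lam.im = 0))
    (u : ℂ → ℂ)
    (hu : ∀ z, u z = -1 + (f z - z) *
      ∫ t in (0:ℝ)..1,
        (deriv f ((1 - (t:ℂ)) * z + (t:ℂ) * f z) - 1) /
          ((f ((1 - (t:ℂ)) * z + (t:ℂ) * f z) - ((1 - (t:ℂ)) * z + (t:ℂ) * f z)) *
            Complex.log (deriv f ((1 - (t:ℂ)) * z + (t:ℂ) * f z)))) :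
    ∃ g : ℂ → ℂ, AnalyticAt ℂ g p ∧ g p = 0 ∧ ∀ᶠ z in 𝓝[≠] p, g z = u z := by
  -- basic facts about lam
  have hlam_slit : lam ∈ Complex.slitPlane := by
    rw [Complex.mem_slitPlane_iff]
    by_contra hc
    push_neg at hc
    exact hslit ⟨hc.1, hc.2⟩
  have hlam0 : lam ≠ 0 := Complex.slitPlane_ne_zero hlam_slit
  have hlog0 : Complex.log lam ≠ 0 := fun hl => h1 (by
    rw [← Complex.exp_log hlam0, hl, Complex.exp_zero])
  have hlam1 : lam - 1 ≠ 0 := sub_ne_zero.mpr h1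
  -- a ball around p inside U
  obtain ⟨R₀, hR₀pos, hR₀U⟩ : ∃ R, 0 < R ∧ ball p R ⊆ U := by
    rcases Metric.isOpen_iff.mp hU p hpU with ⟨R, hR, hsub⟩
    exact ⟨R, hR, hsub⟩
  have hBopen : IsOpen (ball p R₀) := isOpen_ball
  have hBp : p ∈ ball p R₀ := mem_ball_self hR₀pos
  have hfB : DifferentiableOn ℂ f (ball p R₀) := hf.mono hR₀U
  have hfa : AnalyticOnNhd ℂ f (ball p R₀) := hfB.analyticOnNhd hBopen
  have hf'B : AnalyticOnNhd ℂ (deriv f) (ball p R₀) := hfa.deriv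
  have hf'c : ContinuousOn (deriv f) (ball p R₀) := fun z hz =>
    ((hf'B z hz).continuousAt).continuousWithinAt
  have hfc : ContinuousOn f (ball p R₀) := hfB.continuousOn
  have hfp' : DifferentiableAt ℂ f p := hfB.differentiableAt (hBopen.mem_nhds hBp)
  -- dslope functions
  have hφB : DifferentiableOn ℂ (fun z => f z - z) (ball p R₀) := hfB.sub differentiableOn_id
  have hhB : DifferentiableOn ℂ (dslope (fun w => f w - w) p) (ball p R₀) :=
    (Complex.differentiableOn_dslope (hBopen.mem_nhds hBp)).mpr hφB
  have hkB : DifferentiableOn ℂ (dslope f p) (ball p R₀) :=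
    (Complex.differentiableOn_dslope (hBopen.mem_nhds hBp)).mpr hfB
  have hhc : ContinuousOn (dslope (fun w => f w - w) p) (ball p R₀) := hhB.continuousOn
  have hkc : ContinuousOn (dslope f p) (ball p R₀) := hkB.continuousOn
  have hhp : dslope (fun w => f w - w) p p = lam - 1 := by
    rw [dslope_same]
    have : HasDerivAt (fun z => f z - z) (lam - 1) p := by
      have h := hfp'.hasDerivAt.sub (hasDerivAt_id' p); rw [hmult] at h; exact h
    exact this.deriv
  have hkp : dslope f p p = lam := by rw [dslope_same, hmult]
  have hhp0 : dslope (fun w => f w - w) p p ≠ 0 := by rw [hhp]; exact hlam1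
  have hφfac : ∀ z, f z - z = (z - p) * dslope (fun w => f w - w) p z := by
    intro z
    have := sub_smul_dslope (fun z => f z - z) p z
    simp only [smul_eq_mul, hfix, sub_self, sub_zero] at this
    rw [← this]
  have hkfac : ∀ z, f z - p = (z - p) * dslope f p z := by
    intro z
    have := sub_smul_dslope f p z
    simp only [smul_eq_mul, hfix] at this
    rw [← this]
  have hγfac : ∀ (z : ℂ) (t : ℝ),
      ((1 - (t:ℂ)) * z + (t:ℂ) * f z) - p = (z - p) * ((1 - (t:ℂ)) + (t:ℂ) * dslope f p z) := by
    intro z t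
    linear_combination (t:ℂ) * hkfac z
  have hγp : ∀ t : ℝ, (1 - (t:ℂ)) * p + (t:ℂ) * f p = p := by
    intro t; rw [hfix]; ring
  -- key identity off the fixed point
  have hkey : ∀ z : ℂ, z ≠ p → u z = -1 + ∫ t in (0:ℝ)..1, Gaux f p z t := by
    intro z hz
    rw [hu]
    congr 1
    rw [← intervalIntegral.integral_const_mul]
    refine intervalIntegral.integral_congr fun t _ => ?_
    have hzp : z - p ≠ 0 := sub_ne_zero.mpr hz
    simp only [Gaux]
    set γ := (1 - (t:ℂ)) * z + (t:ℂ) * f z with hγdef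
    have e1 : f γ - γ = (z - p) *
        (((1 - (t:ℂ)) + (t:ℂ) * dslope f p z) * dslope (fun w => f w - w) p γ) := by
      rw [hφfac γ, hγfac z t]; ring
    rw [e1, hφfac z]
    rw [show (z - p) * (((1 - (t:ℂ)) + (t:ℂ) * dslope f p z) * dslope (fun w => f w - w) p γ) *
          Complex.log (deriv f γ)
        = (z - p) * (((1 - (t:ℂ)) + (t:ℂ) * dslope f p z) * dslope (fun w => f w - w) p γ *
          Complex.log (deriv f γ)) by ring]
    rw [← mul_div_assoc, mul_assoc, mul_div_mul_left _ _ hzp]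
  -- value at p
  have hval : (-1 + ∫ t in (0:ℝ)..1, Gaux f p p t : ℂ) = 0 := by
    have hGp : ∀ t ∈ uIcc (0:ℝ) 1, Gaux f p p t =
        (lam - 1) / ((1 - (t:ℂ)) + (t:ℂ) * lam) * (Complex.log lam)⁻¹ := by
      intro t ht
      rw [uIcc_of_le (by norm_num)] at ht
      simp only [Gaux]
      rw [hγp t, hhp, hkp, hmult]
      have hA := seg_ne_zero' hslit ht
      field_simp
    have e2 : ∫ t in (0:ℝ)..1, Gaux f p p t =
        (∫ t in (0:ℝ)..1, (lam - 1) / ((1 - (t:ℂ)) + (t:ℂ) * lam)) * (Complex.log lam)⁻¹ := by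
      rw [← intervalIntegral.integral_mul_const]
      exact intervalIntegral.integral_congr hGp
    have hwderiv : ∀ t ∈ uIcc (0:ℝ) 1,
        HasDerivAt (fun s : ℝ => Complex.log ((1 - (s:ℂ)) + (s:ℂ) * lam))
          ((lam - 1) / ((1 - (t:ℂ)) + (t:ℂ) * lam)) t := by
      intro t ht
      rw [uIcc_of_le (by norm_num)] at ht
      have hid : HasDerivAt (fun s : ℝ => (s:ℂ)) 1 t := by
        simpa using (hasDerivAt_id t).ofReal_comp
      have hwt : HasDerivAt (fun s : ℝ => (1 - (s:ℂ)) + (s:ℂ) * lam) (lam - 1) t := by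
        have := ((hasDerivAt_const t (1:ℂ)).sub hid).add (hid.mul_const lam)
        exact this.congr_deriv (by ring)
      have hmem := seg_mem_slitPlane' hslit ht
      have hlog := (Complex.hasDerivAt_log hmem).scomp t hwt
      exact hlog.congr_deriv (by rw [smul_eq_mul, div_eq_mul_inv])
    have hcont : ContinuousOn (fun t : ℝ => (lam - 1) / ((1 - (t:ℂ)) + (t:ℂ) * lam))
        (uIcc (0:ℝ) 1) := by
      apply continuousOn_const.div
      · fun_prop
      · intro t ht
        rw [uIcc_of_le (by norm_num)] at ht
        exact seg_ne_zero' hslit ht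
    have hFTC := intervalIntegral.integral_eq_sub_of_hasDerivAt hwderiv hcont.intervalIntegrable
    norm_num at hFTC
    rw [e2, hFTC, mul_inv_cancel₀ hlog0]
    ring
  -- analyticity
  have han : AnalyticAt ℂ (fun z => -1 + ∫ t in (0:ℝ)..1, Gaux f p z t) p := by
    classical
    -- a good open set W of points where the integrand data is well-behaved
    obtain ⟨W, hWopen, hWB, hWmem, hpW⟩ : ∃ W : Set ℂ, IsOpen W ∧ W ⊆ ball p R₀ ∧
        (∀ z ∈ W, deriv f z ∈ Complex.slitPlane ∧
          dslope (fun w => f w - w) p z ≠ 0 ∧ Complex.log (deriv f z) ≠ 0) ∧ p ∈ W := by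
      refine ⟨(ball p R₀ ∩ deriv f ⁻¹' Complex.slitPlane ∩
          (dslope (fun w => f w - w) p) ⁻¹' ({0}ᶜ : Set ℂ)) ∩
          (fun z => Complex.log (deriv f z)) ⁻¹' ({0}ᶜ : Set ℂ), ?_, ?_, ?_, ?_⟩
      · have hV₁open : IsOpen (ball p R₀ ∩ deriv f ⁻¹' Complex.slitPlane) :=
          hf'c.isOpen_inter_preimage hBopen Complex.isOpen_slitPlane
        have hV₂open : IsOpen (ball p R₀ ∩ deriv f ⁻¹' Complex.slitPlane ∩
            (dslope (fun w => f w - w) p) ⁻¹' ({0}ᶜ : Set ℂ)) :=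
          (hhc.mono (inter_subset_left)).isOpen_inter_preimage hV₁open isOpen_compl_singleton
        refine ContinuousOn.isOpen_inter_preimage ?_ hV₂open isOpen_compl_singleton
        exact (hf'c.mono ((inter_subset_left).trans inter_subset_left)).clog
          fun z hz => hz.1.2
      · exact (inter_subset_left).trans ((inter_subset_left).trans inter_subset_left)
      · exact fun z hz => ⟨hz.1.1.2, hz.1.2, hz.2⟩
      · exact ⟨⟨⟨hBp, by simp only [mem_preimage, hmult]; exact hlam_slit⟩,
          by simp only [mem_preimage, mem_compl_singleton_iff]; exact hhp0⟩,
          by simp only [mem_preimage, mem_compl_singleton_iff, hmult]; exact hlog0⟩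
    -- continuity of the auxiliary maps on ball × ℝ
    have hcγS : ContinuousOn (fun x : ℂ × ℝ => (1 - (x.2:ℂ)) * x.1 + (x.2:ℂ) * f x.1)
        (ball p R₀ ×ˢ (univ : Set ℝ)) := by
      apply ContinuousOn.add
      · exact ((continuous_const.sub (Complex.continuous_ofReal.comp continuous_snd)).continuousOn).mul
          continuousOn_fst
      · exact ((Complex.continuous_ofReal.comp continuous_snd).continuousOn).mul
          (hfc.comp continuousOn_fst fun x hx => hx.1)
    have hAfnS : ContinuousOn (fun x : ℂ × ℝ => (1 - (x.2:ℂ)) + (x.2:ℂ) * dslope f p x.1)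
        (ball p R₀ ×ˢ (univ : Set ℝ)) := by
      apply ContinuousOn.add
      · exact (continuous_const.sub (Complex.continuous_ofReal.comp continuous_snd)).continuousOn
      · exact ((Complex.continuous_ofReal.comp continuous_snd).continuousOn).mul
          (hkc.comp continuousOn_fst fun x hx => hx.1)
    -- the good open set in ℂ × ℝ
    obtain ⟨Ω, hΩopen, hΩmem, hpΩ⟩ : ∃ Ω : Set (ℂ × ℝ), IsOpen Ω ∧
        (∀ x ∈ Ω, x.1 ∈ ball p R₀ ∧
          ((1 - (x.2:ℂ)) * x.1 + (x.2:ℂ) * f x.1) ∈ W ∧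
          ((1 - (x.2:ℂ)) + (x.2:ℂ) * dslope f p x.1) ≠ 0) ∧
        (∀ t ∈ Icc (0:ℝ) 1, ((p, t) : ℂ × ℝ) ∈ Ω) := by
      refine ⟨(ball p R₀ ×ˢ (univ : Set ℝ) ∩
          (fun x : ℂ × ℝ => (1 - (x.2:ℂ)) * x.1 + (x.2:ℂ) * f x.1) ⁻¹' W) ∩
          (fun x : ℂ × ℝ => (1 - (x.2:ℂ)) + (x.2:ℂ) * dslope f p x.1) ⁻¹' ({0}ᶜ : Set ℂ),
          ?_, ?_, ?_⟩
      · have hΩ₁ : IsOpen (ball p R₀ ×ˢ (univ : Set ℝ) ∩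
            (fun x : ℂ × ℝ => (1 - (x.2:ℂ)) * x.1 + (x.2:ℂ) * f x.1) ⁻¹' W) :=
          hcγS.isOpen_inter_preimage (hBopen.prod isOpen_univ) hWopen
        exact (hAfnS.mono inter_subset_left).isOpen_inter_preimage hΩ₁ isOpen_compl_singleton
      · exact fun x hx => ⟨hx.1.1.1, hx.1.2, hx.2⟩
      · intro t ht
        refine ⟨⟨⟨hBp, trivial⟩, ?_⟩, ?_⟩
        · simp only [mem_preimage, hγp t]; exact hpW
        · simp only [mem_preimage, mem_compl_singleton_iff, hkp]
          exact seg_ne_zero' hslit ht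
    have hΩS : Ω ⊆ ball p R₀ ×ˢ (univ : Set ℝ) := fun x hx => ⟨(hΩmem x hx).1, trivial⟩
    -- a compact product neighbourhood inside Ω
    have hKΩ : ({p} ×ˢ Icc (0:ℝ) 1 : Set (ℂ × ℝ)) ⊆ Ω := by
      intro x hx
      have hx1 : x.1 = p := hx.1
      have hx2 : x.2 ∈ Icc (0:ℝ) 1 := hx.2
      have : x = (p, x.2) := by rw [← hx1]
      rw [this]
      exact hpΩ x.2 hx2
    obtain ⟨δ, hδpos, hδ⟩ :=
      (isCompact_singleton.prod isCompact_Icc).exists_cthickening_subset_open hΩopen hKΩ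
    obtain ⟨r, hrpos, hrδ, hrR₀⟩ : ∃ r : ℝ, 0 < r ∧ r ≤ δ ∧ r ≤ R₀ / 2 :=
      ⟨min δ (R₀ / 2), lt_min hδpos (by linarith), min_le_left _ _, min_le_right _ _⟩
    have hrB : closedBall p r ⊆ ball p R₀ := by
      intro z hz
      rw [mem_closedBall] at hz
      rw [mem_ball]
      linarith
    have hsub : ∀ z ∈ closedBall p r, ∀ t ∈ Icc (0:ℝ) 1, ((z, t) : ℂ × ℝ) ∈ Ω := by
      intro z hz t ht
      apply hδ
      apply mem_cthickening_of_dist_le (z, t) (p, t) δ ({p} ×ˢ Icc (0:ℝ) 1) ⟨rfl, ht⟩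
      rw [Prod.dist_eq]
      simp only [dist_self]
      rw [max_le_iff]
      exact ⟨le_trans (mem_closedBall.mp hz) hrδ, hδpos.le⟩
    -- joint continuity of the modified integrand on Ω
    have hGcont : ContinuousOn (fun x : ℂ × ℝ => Gaux f p x.1 x.2) Ω := by
      simp only [Gaux]
      have hγΩ : ContinuousOn (fun x : ℂ × ℝ => (1 - (x.2:ℂ)) * x.1 + (x.2:ℂ) * f x.1) Ω :=
        hcγS.mono hΩS
      have hγW : ∀ x ∈ Ω, ((1 - (x.2:ℂ)) * x.1 + (x.2:ℂ) * f x.1) ∈ W :=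
        fun x hx => (hΩmem x hx).2.1
      have hdf : ContinuousOn
          (fun x : ℂ × ℝ => deriv f ((1 - (x.2:ℂ)) * x.1 + (x.2:ℂ) * f x.1)) Ω :=
        hf'c.comp hγΩ fun x hx => hWB (hγW x hx)
      have hhγ : ContinuousOn (fun x : ℂ × ℝ =>
          dslope (fun w => f w - w) p ((1 - (x.2:ℂ)) * x.1 + (x.2:ℂ) * f x.1)) Ω :=
        hhc.comp hγΩ fun x hx => hWB (hγW x hx)
      have hlogγ : ContinuousOn (fun x : ℂ × ℝ =>
          Complex.log (deriv f ((1 - (x.2:ℂ)) * x.1 + (x.2:ℂ) * f x.1))) Ω :=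
        hdf.clog fun x hx => (hWmem _ (hγW x hx)).1
      apply ContinuousOn.div
      · exact (hhc.comp continuousOn_fst fun x hx => (hΩmem x hx).1).mul
          (hdf.sub continuousOn_const)
      · exact (((hAfnS.mono hΩS)).mul hhγ).mul hlogγ
      · intro x hx
        exact mul_ne_zero
          (mul_ne_zero (hΩmem x hx).2.2 (hWmem _ (hγW x hx)).2.1)
          (hWmem _ (hγW x hx)).2.2
    -- bound on a compact set
    have hKc : IsCompact (closedBall p r ×ˢ Icc (0:ℝ) 1) :=
      (isCompact_closedBall p r).prod isCompact_Icc
    have hKcΩ : (closedBall p r ×ˢ Icc (0:ℝ) 1 : Set (ℂ × ℝ)) ⊆ Ω := by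
      intro x hx
      have : x = (x.1, x.2) := rfl
      rw [this]
      exact hsub x.1 hx.1 x.2 hx.2
    obtain ⟨C, hC⟩ := hKc.exists_bound_of_continuousOn (hGcont.mono hKcΩ)
    have hC' : ∀ z ∈ closedBall p r, ∀ t ∈ Icc (0:ℝ) 1, ‖Gaux f p z t‖ ≤ C :=
      fun z hz t ht => hC (z, t) ⟨hz, ht⟩
    have hC0 : 0 ≤ C := le_trans (norm_nonneg _)
      (hC' p (mem_closedBall_self hrpos.le) 0 ⟨le_refl 0, by norm_num⟩)
    -- differentiability in z on Ω
    have hGdiff : ∀ x : ℂ × ℝ, x ∈ Ω → DifferentiableAt ℂ (fun w => Gaux f p w x.2) x.1 := by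
      intro x hx
      obtain ⟨hx1, hxW, hxA⟩ := hΩmem x hx
      obtain ⟨hγslit, hγh, hγlog⟩ := hWmem _ hxW
      have hγB : ((1 - (x.2:ℂ)) * x.1 + (x.2:ℂ) * f x.1) ∈ ball p R₀ := hWB hxW
      have hγd : DifferentiableAt ℂ (fun w => (1 - (x.2:ℂ)) * w + (x.2:ℂ) * f w) x.1 :=
        (differentiableAt_id.const_mul _).add
          ((hfB.differentiableAt (hBopen.mem_nhds hx1)).const_mul _)
      have hdfd : DifferentiableAt ℂ
          (fun w => deriv f ((1 - (x.2:ℂ)) * w + (x.2:ℂ) * f w)) x.1 :=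
        DifferentiableAt.comp (g := deriv f) x.1 ((hf'B _ hγB).differentiableAt) hγd
      have hhγd : DifferentiableAt ℂ
          (fun w => dslope (fun w => f w - w) p ((1 - (x.2:ℂ)) * w + (x.2:ℂ) * f w)) x.1 :=
        DifferentiableAt.comp x.1 (hhB.differentiableAt (hBopen.mem_nhds hγB)) hγd
      simp only [Gaux]
      apply DifferentiableAt.div
      · exact (hhB.differentiableAt (hBopen.mem_nhds hx1)).mul
          (hdfd.sub (differentiableAt_const 1))
      · refine DifferentiableAt.mul (DifferentiableAt.mul ?_ hhγd) (hdfd.clog hγslit)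
        exact (differentiableAt_const _).add
          ((hkB.differentiableAt (hBopen.mem_nhds hx1)).const_mul _)
      · exact mul_ne_zero (mul_ne_zero hxA hγh) hγlog
    -- Schwarz-type derivative bound
    have hbound : ∀ z ∈ ball p (r / 2), ∀ t ∈ Icc (0:ℝ) 1,
        ‖deriv (fun w => Gaux f p w t) z‖ ≤ (2 * C + 1) / (r / 2) := by
      intro z hz t ht
      have hzr : z ∈ closedBall p r := by
        rw [mem_closedBall]
        have := mem_ball.mp hz
        linarith
      have hsub2 : ball z (r / 2) ⊆ closedBall p r := by
        intro w hw
        rw [mem_closedBall]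
        have h1 := mem_ball.mp hw
        have h2 := mem_ball.mp hz
        calc dist w p ≤ dist w z + dist z p := dist_triangle _ _ _
          _ ≤ r := by linarith
      have hd : DifferentiableOn ℂ (fun w => Gaux f p w t) (ball z (r / 2)) := fun w hw =>
        (hGdiff (w, t) (hsub w (hsub2 hw) t ht)).differentiableWithinAt
      have hmaps : MapsTo (fun w => Gaux f p w t) (ball z (r / 2))
          (ball (Gaux f p z t) (2 * C + 1)) := by
        intro w hw
        rw [mem_ball, dist_eq_norm]
        have h1 := hC' w (hsub2 hw) t ht
        have h2 := hC' z hzr t ht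
        calc ‖Gaux f p w t - Gaux f p z t‖ ≤ ‖Gaux f p w t‖ + ‖Gaux f p z t‖ := norm_sub_le _ _
          _ < 2 * C + 1 := by linarith
      exact Complex.norm_deriv_le_div_of_mapsTo_ball hd (hmaps.mono_right ball_subset_closedBall) (by linarith)
    -- measurability in t
    have hcont_t : ∀ z ∈ closedBall p r, ContinuousOn (fun t : ℝ => Gaux f p z t) (Icc 0 1) := by
      intro z hz
      have hc : ContinuousOn (fun t : ℝ => ((z, t) : ℂ × ℝ)) (Icc 0 1) :=
        (continuous_const.prodMk continuous_id).continuousOn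
      have hm : MapsTo (fun t : ℝ => ((z, t) : ℂ × ℝ)) (Icc 0 1) Ω :=
        fun t ht => hsub z hz t ht
      exact hGcont.comp hc hm
    have hIoc_Icc : (Ι (0:ℝ) 1) ⊆ Icc (0:ℝ) 1 := by
      rw [uIoc_of_le (by norm_num : (0:ℝ) ≤ 1)]
      exact Ioc_subset_Icc_self
    have hmeas : ∀ z ∈ closedBall p r, MeasureTheory.AEStronglyMeasurable
        (fun t => Gaux f p z t) (MeasureTheory.volume.restrict (Ι (0:ℝ) 1)) := by
      intro z hz
      exact ((hcont_t z hz).aestronglyMeasurable measurableSet_Icc).mono_measure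
        (MeasureTheory.Measure.restrict_mono hIoc_Icc le_rfl)
    have hint : ∀ z ∈ closedBall p r,
        IntervalIntegrable (fun t => Gaux f p z t) MeasureTheory.volume 0 1 := by
      intro z hz
      apply ContinuousOn.intervalIntegrable
      rw [uIcc_of_le (by norm_num : (0:ℝ) ≤ 1)]
      exact hcont_t z hz
    have hhalf : ball p (r / 2) ⊆ closedBall p r := by
      intro z hz
      rw [mem_closedBall]
      have := mem_ball.mp hz
      linarith
    -- measurability of the derivative in t, via difference quotients
    have hmeas' : ∀ z₀ ∈ ball p (r / 2), MeasureTheory.AEStronglyMeasurable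
        (fun t => deriv (fun w => Gaux f p w t) z₀)
        (MeasureTheory.volume.restrict (Ι (0:ℝ) 1)) := by
      intro z₀ hz₀
      have hcn_pos : ∀ n : ℕ, (0:ℝ) < (r / 2) * (1 / (n + 1)) := by
        intro n
        apply mul_pos (by linarith)
        positivity
      have hcn_ne : ∀ n : ℕ, ((((r / 2) * (1 / (n + 1))) : ℝ) : ℂ) ≠ 0 := by
        intro n
        simp only [ne_eq, Complex.ofReal_eq_zero]
        exact (hcn_pos n).ne'
      have hcn_le : ∀ n : ℕ, (r / 2) * (1 / (n + 1)) ≤ r / 2 := by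
        intro n
        apply mul_le_of_le_one_right (by linarith)
        rw [div_le_one (by positivity)]
        simp
      have hcn_mem : ∀ n : ℕ, z₀ + ((((r / 2) * (1 / (n + 1))) : ℝ) : ℂ) ∈ closedBall p r := by
        intro n
        rw [mem_closedBall]
        have h1 : dist (z₀ + ((((r / 2) * (1 / (n + 1))) : ℝ) : ℂ)) z₀ ≤ r / 2 := by
          rw [dist_eq_norm, add_sub_cancel_left, Complex.norm_real,
            Real.norm_eq_abs, abs_of_pos (hcn_pos n)]
          exact hcn_le n
        have h2 := mem_ball.mp hz₀
        calc dist (z₀ + ((((r / 2) * (1 / (n + 1))) : ℝ) : ℂ)) p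
            ≤ dist (z₀ + ((((r / 2) * (1 / (n + 1))) : ℝ) : ℂ)) z₀ + dist z₀ p :=
              dist_triangle _ _ _
          _ ≤ r := by linarith
      have hfn : ∀ n : ℕ, MeasureTheory.AEStronglyMeasurable
          (fun t => (((((r / 2) * (1 / (n + 1))) : ℝ) : ℂ))⁻¹ *
            (Gaux f p (z₀ + ((((r / 2) * (1 / (n + 1))) : ℝ) : ℂ)) t - Gaux f p z₀ t))
          (MeasureTheory.volume.restrict (Ι (0:ℝ) 1)) := by
        intro n
        have h1 := (hmeas _ (hcn_mem n)).sub (hmeas _ (hhalf hz₀))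
        exact h1.const_mul _
      have hlim : ∀ᵐ t ∂(MeasureTheory.volume.restrict (Ι (0:ℝ) 1)),
          Tendsto (fun n : ℕ => (((((r / 2) * (1 / (n + 1))) : ℝ) : ℂ))⁻¹ *
            (Gaux f p (z₀ + ((((r / 2) * (1 / (n + 1))) : ℝ) : ℂ)) t - Gaux f p z₀ t))
            atTop (𝓝 (deriv (fun w => Gaux f p w t) z₀)) := by
        filter_upwards [MeasureTheory.ae_restrict_mem measurableSet_uIoc] with t ht
        have htI : t ∈ Icc (0:ℝ) 1 := hIoc_Icc ht
        have hD := (hGdiff (z₀, t) (hsub z₀ (hhalf hz₀) t htI)).hasDerivAt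
        rw [hasDerivAt_iff_tendsto_slope] at hD
        have hseq : Tendsto (fun n : ℕ => z₀ + ((((r / 2) * (1 / (n + 1))) : ℝ) : ℂ))
            atTop (𝓝[≠] z₀) := by
          rw [tendsto_nhdsWithin_iff]
          constructor
          · have h0 : Tendsto (fun n : ℕ => (r / 2) * (1 / (n + 1) : ℝ)) atTop (𝓝 0) := by
              simpa using tendsto_one_div_add_atTop_nhds_zero_nat.const_mul (r / 2)
            have h1 : Tendsto (fun n : ℕ => ((((r / 2) * (1 / (n + 1))) : ℝ) : ℂ))
                atTop (𝓝 (0:ℂ)) := by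
              have h2 := (Complex.continuous_ofReal.tendsto (0:ℝ)).comp h0
              rw [Complex.ofReal_zero] at h2
              exact h2
            simpa using tendsto_const_nhds.add h1
          · filter_upwards with n
            simp only [mem_compl_singleton_iff]
            intro heq
            rw [add_eq_left] at heq
            exact hcn_ne n heq
        have htend := hD.comp hseq
        apply Tendsto.congr _ htend
        intro n
        simp only [Function.comp_apply]
        rw [slope_def_field, add_sub_cancel_left, div_eq_inv_mul]
      exact aestronglyMeasurable_of_tendsto_ae atTop hfn hlim
    -- differentiability of the parameter integral
    have hDiffOn : DifferentiableOn ℂ (fun z => ∫ t in (0:ℝ)..1, Gaux f p z t)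
        (ball p (r / 4)) := by
      intro z₀ hz₀
      apply DifferentiableAt.differentiableWithinAt
      have hz₀half : z₀ ∈ ball p (r / 2) := by
        rw [mem_ball]
        have := mem_ball.mp hz₀
        linarith
      have hball4 : ball z₀ (r / 4) ⊆ ball p (r / 2) := by
        intro x hx
        rw [mem_ball]
        have h1 := mem_ball.mp hx
        have h2 := mem_ball.mp hz₀
        calc dist x p ≤ dist x z₀ + dist z₀ p := dist_triangle _ _ _
          _ < r / 2 := by linarith
      have hmeas_ev : ∀ᶠ x in 𝓝 z₀, MeasureTheory.AEStronglyMeasurable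
          (fun t => Gaux f p x t) (MeasureTheory.volume.restrict (Ι (0:ℝ) 1)) := by
        filter_upwards [isOpen_ball.mem_nhds hz₀half] with x hx
        exact hmeas x (hhalf hx)
      have hbd : ∀ᵐ t ∂(MeasureTheory.volume : MeasureTheory.Measure ℝ), t ∈ Ι (0:ℝ) 1 →
          ∀ x ∈ ball z₀ (r / 4), ‖deriv (fun w => Gaux f p w t) x‖ ≤ (2 * C + 1) / (r / 2) := by
        apply MeasureTheory.ae_of_all
        intro t ht x hx
        exact hbound x (hball4 hx) t (hIoc_Icc ht)
      have hdfae : ∀ᵐ t ∂(MeasureTheory.volume : MeasureTheory.Measure ℝ), t ∈ Ι (0:ℝ) 1 →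
          ∀ x ∈ ball z₀ (r / 4),
            HasDerivAt (fun w => Gaux f p w t) (deriv (fun w => Gaux f p w t) x) x := by
        apply MeasureTheory.ae_of_all
        intro t ht x hx
        exact (hGdiff (x, t) (hsub x (hhalf (hball4 hx)) t (hIoc_Icc ht))).hasDerivAt
      have happ := intervalIntegral.hasDerivAt_integral_of_dominated_loc_of_deriv_le
        (F' := fun z t => deriv (fun w => Gaux f p w t) z)
        (bound := fun _ => (2 * C + 1) / (r / 2))
        (ball_mem_nhds z₀ (by linarith : (0:ℝ) < r / 4)) hmeas_ev (hint z₀ (hhalf hz₀half)) (hmeas' z₀ hz₀half)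
        hbd intervalIntegrable_const hdfae
      exact happ.2.differentiableAt
    have hAn : AnalyticAt ℂ (fun z => ∫ t in (0:ℝ)..1, Gaux f p z t) p :=
      hDiffOn.analyticAt (ball_mem_nhds p (by linarith))
    exact analyticAt_const.add hAn
  exact ⟨fun z => -1 + ∫ t in (0:ℝ)..1, Gaux f p z t, han, hval, by
    filter_upwards [self_mem_nhdsWithin] with z hz
    exact (hkey z hz).symm⟩
end

section
/- Let f_n → f where f has a non-degenerate parabolic fixed point 0 of multiplier 1 and multiplicity q+1, with f_n having fixed points 0 (multiplier λ_n^q ≠ 1) and a q-cycle of multiplier μ_n near 0, all contained in a fixed disk. Then by continuity of the holomorphic index, 1/Log(λ_n^q) + q/Log(μ_n) → résit(f,0) = (q+1)/2 − ι(f,0) as n → ∞. -/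
open Complex Metric Filter Topology Set Asymptotics

lemma pole_sub_inv_tendsto {h : ℂ → ℂ} {c : ℂ} {U : Set ℂ} (hU : IsOpen U) (hcU : c ∈ U)
    (hd : DifferentiableOn ℂ h U) (h0 : h c = 0) (hd0 : deriv h c ≠ 0) :
    ∃ L, Tendsto (fun z => (h z)⁻¹ - (deriv h c)⁻¹ * (z - c)⁻¹) (𝓝[≠] c) (𝓝 L) := by
  have hnh : U ∈ 𝓝 c := hU.mem_nhds hcU
  set d := deriv h c with hd_def
  set g := dslope h c with hg_def
  set k := dslope g c with hk_def
  have hg : DifferentiableOn ℂ g U := (differentiableOn_dslope hnh).2 hd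
  have hk : DifferentiableOn ℂ k U := (differentiableOn_dslope hnh).2 hg
  have hgc : g c = d := dslope_same h c
  have hgcont : ContinuousAt g c := ((hg.differentiableAt hnh)).continuousAt
  have hkcont : ContinuousAt k c := ((hk.differentiableAt hnh)).continuousAt
  refine ⟨-(k c) / (d * d), ?_⟩
  have hlim : Tendsto (fun z => -(k z) / (d * g z)) (𝓝[≠] c) (𝓝 (-(k c) / (d * d))) := by
    have : Tendsto (fun z => -(k z) / (d * g z)) (𝓝 c) (𝓝 (-(k c) / (d * g c))) := by
      exact (hkcont.neg).div (tendsto_const_nhds.mul hgcont) (by rw [hgc]; exact mul_ne_zero hd0 hd0)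
    rw [hgc] at this
    exact this.mono_left nhdsWithin_le_nhds
  refine hlim.congr' ?_
  have hgne : ∀ᶠ z in 𝓝[≠] c, g z ≠ 0 := by
    have : ∀ᶠ z in 𝓝 c, g z ≠ 0 := hgcont.eventually_ne (by rw [hgc]; exact hd0)
    exact this.filter_mono nhdsWithin_le_nhds
  filter_upwards [hgne, self_mem_nhdsWithin] with z hgz (hz : z ≠ c)
  have hzc : z - c ≠ 0 := sub_ne_zero.2 hz
  have e1 : h z = (z - c) * g z := by
    have := sub_smul_dslope h c z
    simp only [smul_eq_mul, h0, sub_zero] at this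
    rw [← this, hg_def]
  have e2 : g z = d + (z - c) * k z := by
    have := sub_smul_dslope g c z
    simp only [smul_eq_mul, hgc] at this
    have hk' : dslope g c z = k z := rfl
    rw [hk'] at this
    linear_combination -this
  rw [e1, e2]
  rw [e2] at hgz
  field_simp
  have hX : (k z * z - k z * c + d) * (k z * z - k z * c + d)⁻¹ = 1 :=
    mul_inv_cancel₀ (by intro h; apply hgz; linear_combination h)
  linear_combination -hX

lemma residue_sum (r₀ r : ℝ) (hr : 0 < r) (hrr : r < r₀) :
    ∀ (T : Finset ℂ) (F w : ℂ → ℂ), ↑T ⊆ ball (0:ℂ) r →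
    (∀ z ∈ ball (0:ℂ) r₀ \ ↑T, DifferentiableAt ℂ F z) →
    (∀ c ∈ T, ∃ L, Tendsto (fun z => F z - w c * (z - c)⁻¹) (𝓝[≠] c) (𝓝 L)) →
    (∮ z in C(0, r), F z) = (2 * ↑Real.pi * Complex.I) * ∑ c ∈ T, w c := by
  intro T
  induction T using Finset.induction with
  | empty =>
    intro F w _ hd _
    have hdd : ∀ z ∈ ball (0:ℂ) r₀, DifferentiableAt ℂ F z := by
      intro z hz; exact hd z ⟨hz, by simp⟩
    simp only [Finset.sum_empty, mul_zero]
    refine circleIntegral_eq_zero_of_differentiable_on_off_countable hr.le Set.countable_empty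
      (fun z hz => (hdd z (closedBall_subset_ball hrr hz)).continuousAt.continuousWithinAt)
      (fun z hz => hdd z (ball_subset_ball hrr.le hz.1))
  | @insert c s hcs ih =>
    intro F w hT hd hb
    have hcball : c ∈ ball (0:ℂ) r := hT (by simp)
    have hsball : ↑s ⊆ ball (0:ℂ) r := fun x hx => hT (by simp [hx])
    obtain ⟨L, hL⟩ := hb c (Finset.mem_insert_self c s)
    set F₁ : ℂ → ℂ := fun z => F z - w c * (z - c)⁻¹ with hF₁
    set F' : ℂ → ℂ := Function.update F₁ c (limUnder (𝓝[≠] c) F₁) with hF'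
    -- F' agrees with F₁ away from c
    have hF'eq : ∀ z, z ≠ c → F' z = F₁ z := fun z hz => Function.update_of_ne hz _ _
    -- differentiability of F₁ off insert c s
    have hdF₁ : ∀ z ∈ ball (0:ℂ) r₀ \ ↑(insert c s), DifferentiableAt ℂ F₁ z := by
      intro z hz
      have hzc : z ≠ c := by
        intro h; exact hz.2 (by simp [h])
      exact (hd z hz).sub ((differentiableAt_const _).mul
        ((differentiableAt_id.sub_const c).inv (sub_ne_zero.2 hzc)))
    -- the open set V
    have hVopen : IsOpen (ball (0:ℂ) r₀ \ ↑s) := isOpen_ball.sdiff (s.finite_toSet.isClosed)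
    have hcV : c ∈ ball (0:ℂ) r₀ \ ↑s :=
      ⟨ball_subset_ball hrr.le hcball, by simpa using hcs⟩
    -- boundedness near c
    have hbdd : ∀ᶠ z in 𝓝[≠] c, ‖F₁ z‖ ≤ ‖L‖ + 1 :=
      hL.norm.eventually (eventually_le_nhds (lt_add_one ‖L‖))
    rw [eventually_nhdsWithin_iff] at hbdd
    obtain ⟨δ, hδpos, hδ⟩ := Metric.mem_nhds_iff.1
      (Filter.inter_mem hbdd (hVopen.mem_nhds hcV))
    -- F' is differentiable on ball c δ
    have hdiffδ : DifferentiableOn ℂ F' (ball c δ) := by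
      refine Complex.differentiableOn_update_limUnder_of_bddAbove
        (isOpen_ball.mem_nhds (mem_ball_self hδpos)) ?_ ?_
      · intro z hz
        have h1 : z ∈ ball (0:ℂ) r₀ \ ↑s := (hδ hz.1).2
        have h2 : z ≠ c := hz.2
        refine (hdF₁ z ⟨h1.1, ?_⟩).differentiableWithinAt
        simp only [Finset.coe_insert, Set.mem_insert_iff, not_or]
        exact ⟨h2, fun h => h1.2 h⟩
      · refine ⟨‖L‖ + 1, ?_⟩
        rintro x ⟨z, hz, rfl⟩
        exact (hδ hz.1).1 hz.2
    -- F' differentiable off s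
    have hdF' : ∀ z ∈ ball (0:ℂ) r₀ \ ↑s, DifferentiableAt ℂ F' z := by
      intro z hz
      rcases eq_or_ne z c with rfl | hzc
      · exact hdiffδ.differentiableAt (isOpen_ball.mem_nhds (mem_ball_self hδpos))
      · have : F' =ᶠ[𝓝 z] F₁ := by
          filter_upwards [isOpen_ne.mem_nhds hzc] with x hx using hF'eq x hx
        refine (hdF₁ z ⟨hz.1, ?_⟩).congr_of_eventuallyEq this
        simp only [Finset.coe_insert, Set.mem_insert_iff, not_or]
        exact ⟨hzc, fun h => hz.2 h⟩
    -- pole data for F' on s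
    have hbF' : ∀ c' ∈ s, ∃ L', Tendsto (fun z => F' z - w c' * (z - c')⁻¹) (𝓝[≠] c') (𝓝 L') := by
      intro c' hc'
      have hc'c : c' ≠ c := fun h => hcs (h ▸ hc')
      obtain ⟨L', hL'⟩ := hb c' (Finset.mem_insert_of_mem hc')
      refine ⟨L' - w c * (c' - c)⁻¹, ?_⟩
      have htail : Tendsto (fun z => w c * (z - c)⁻¹) (𝓝[≠] c') (𝓝 (w c * (c' - c)⁻¹)) := by
        exact (tendsto_const_nhds.mul ((Filter.tendsto_id.sub_const c).inv₀
          (sub_ne_zero.2 hc'c))).mono_left nhdsWithin_le_nhds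
      have := hL'.sub htail
      refine this.congr' ?_
      have : ∀ᶠ z in 𝓝[≠] c', z ≠ c := by
        have : ∀ᶠ z in 𝓝 c', z ≠ c := isOpen_ne.eventually_mem hc'c
        exact this.filter_mono nhdsWithin_le_nhds
      filter_upwards [this] with z hz
      rw [hF'eq z hz]; ring
    -- integrability on the sphere
    have hsphere : sphere (0:ℂ) r ⊆ ball (0:ℂ) r₀ \ ↑s := by
      intro z hz
      rw [mem_sphere_zero_iff_norm] at hz
      refine ⟨mem_ball_zero_iff.2 (hz ▸ hrr), fun hzs => ?_⟩
      have := mem_ball_zero_iff.1 (hsball hzs)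
      rw [hz] at this
      exact lt_irrefl r this
    have hznec : ∀ z ∈ sphere (0:ℂ) r, z ≠ c := by
      intro z hz h
      have h2 := mem_ball_zero_iff.1 hcball
      rw [mem_sphere_zero_iff_norm, h] at hz
      rw [hz] at h2
      exact lt_irrefl r h2
    have hcontF' : ContinuousOn F' (sphere (0:ℂ) r) :=
      fun z hz => (hdF' z (hsphere hz)).continuousAt.continuousWithinAt
    have hint1 : CircleIntegrable F' 0 r := hcontF'.circleIntegrable hr.le
    have hint2 : CircleIntegrable (fun z => w c * (z - c)⁻¹) 0 r := by
      refine ContinuousOn.circleIntegrable hr.le ?_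
      intro z hz
      exact (continuousWithinAt_const.mul ((continuousWithinAt_id.sub
        continuousWithinAt_const).inv₀ (sub_ne_zero.2 (hznec z hz))))
    have hsphereF : ∀ z ∈ sphere (0:ℂ) r, DifferentiableAt ℂ F z := by
      intro z hz
      have h1 := hsphere hz
      refine hd z ⟨h1.1, ?_⟩
      simp only [Finset.coe_insert, Set.mem_insert_iff, not_or]
      exact ⟨hznec z hz, fun h => h1.2 h⟩
    have hcont0 : ContinuousOn F (sphere (0:ℂ) r) :=
      fun z hz => (hsphereF z hz).continuousAt.continuousWithinAt
    have hint0 : CircleIntegrable F 0 r := hcont0.circleIntegrable hr.le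
    -- main computation
    have hEq : EqOn (fun z => F z - w c * (z - c)⁻¹) F' (sphere (0:ℂ) r) := by
      intro z hz
      exact (hF'eq z (hznec z hz)).symm
    have key : (∮ z in C(0, r), F' z) = (∮ z in C(0, r), F z) - ∮ z in C(0, r), w c * (z - c)⁻¹ := by
      rw [← circleIntegral.integral_congr hr.le hEq]
      exact circleIntegral.integral_sub hint0 hint2
    have hval : (∮ z in C(0, r), w c * (z - c)⁻¹) = w c * (2 * ↑Real.pi * Complex.I) := by
      have : (∮ z in C(0, r), w c * (z - c)⁻¹) = w c • ∮ z in C(0, r), (z - c)⁻¹ := by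
        rw [← circleIntegral.integral_smul]
        simp [smul_eq_mul]
      rw [this, circleIntegral.integral_sub_inv_of_mem_ball hcball, smul_eq_mul]
    have hIH := ih F' w hsball hdF' hbF'
    have : (∮ z in C(0, r), F z) =
        (2 * ↑Real.pi * Complex.I) * (∑ c' ∈ s, w c') + w c * (2 * ↑Real.pi * Complex.I) := by
      rw [← hIH, key, hval]; ring
    rw [this, Finset.sum_insert hcs]
    ring

lemma log_asym {w : ℕ → ℂ} (hw : Tendsto w atTop (𝓝 1)) (hw1 : ∀ n, w n ≠ 1) :
    Tendsto (fun n => (Complex.log (w n))⁻¹ + ((1:ℂ) - w n)⁻¹) atTop (𝓝 (1/2)) := by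
  set u : ℕ → ℂ := fun n => Complex.log (w n) with hu_def
  have hu : Tendsto u atTop (𝓝 0) := by
    have hcont : ContinuousAt Complex.log 1 :=
      continuousAt_clog (by norm_num [Complex.mem_slitPlane_iff])
    have := hcont.tendsto.comp hw
    rwa [Complex.log_one] at this
  have hwne : ∀ᶠ n in atTop, w n ≠ 0 := by
    filter_upwards [hw.eventually (isOpen_ne.eventually_mem (one_ne_zero))] with n hn using hn
  have hexp : ∀ᶠ n in atTop, Complex.exp (u n) = w n := by
    filter_upwards [hwne] with n hn using Complex.exp_log hn
  have hune : ∀ᶠ n in atTop, u n ≠ 0 := by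
    filter_upwards [hexp] with n hn h0
    rw [h0, Complex.exp_zero] at hn
    exact hw1 n hn.symm
  have husmall : ∀ᶠ n in atTop, ‖u n‖ ≤ 1 := by
    have : {z : ℂ | ‖z‖ ≤ 1} ∈ 𝓝 (0:ℂ) := by
      have : Metric.closedBall (0:ℂ) 1 ∈ 𝓝 (0:ℂ) := closedBall_mem_nhds _ one_pos
      simpa [Metric.closedBall, Complex.dist_eq] using this
    exact hu.eventually this
  have habs : Tendsto (fun n => ‖u n‖) atTop (𝓝 0) := by simpa using hu.norm
  -- N n → 1/2
  have hN : Tendsto (fun n => (Complex.exp (u n) - 1 - u n) / (u n)^2) atTop (𝓝 (1/2)) := by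
    rw [tendsto_iff_norm_sub_tendsto_zero]
    refine squeeze_zero_norm' ?_ habs
    filter_upwards [hune, husmall] with n h1 h2
    have hsum : ∑ m ∈ Finset.range 3, (u n)^m / m.factorial = 1 + u n + (u n)^2/2 := by
      simp [Finset.sum_range_succ]
    have hb := Complex.exp_bound h2 (by norm_num : 0 < 3)
    rw [hsum] at hb
    norm_num [Nat.factorial] at hb
    have hb' : ‖Complex.exp (u n) - (1 + u n + (u n)^2/2)‖
        ≤ ‖u n‖ ^ 3 := by
      refine hb.trans ?_
      nlinarith [pow_nonneg (norm_nonneg (u n)) 3]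
    have he : (Complex.exp (u n) - 1 - u n) / (u n)^2 - 1/2
        = (Complex.exp (u n) - (1 + u n + (u n)^2/2)) / (u n)^2 := by
      field_simp
      ring
    have hpos : (0:ℝ) < ‖(u n)^2‖ := by
      rw [norm_pos_iff]
      exact pow_ne_zero 2 h1
    rw [he, norm_div, Real.norm_eq_abs, _root_.abs_of_nonneg (by positivity), div_le_iff₀ hpos]
    calc ‖Complex.exp (u n) - (1 + u n + (u n)^2/2)‖ ≤ ‖u n‖ ^ 3 := hb'
      _ = ‖u n‖ * ‖(u n)^2‖ := by
          rw [norm_pow]; ring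
  -- M n → 1
  have hM : Tendsto (fun n => (Complex.exp (u n) - 1) / (u n)) atTop (𝓝 1) := by
    rw [tendsto_iff_norm_sub_tendsto_zero]
    refine squeeze_zero_norm' ?_ habs
    filter_upwards [hune, husmall] with n h1 h2
    have hsum : ∑ m ∈ Finset.range 2, (u n)^m / m.factorial = 1 + u n := by
      simp [Finset.sum_range_succ]
    have hb := Complex.exp_bound h2 (by norm_num : 0 < 2)
    rw [hsum] at hb
    norm_num [Nat.factorial] at hb
    have hb' : ‖Complex.exp (u n) - (1 + u n)‖ ≤ ‖u n‖ ^ 2 := by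
      refine hb.trans ?_
      nlinarith [pow_nonneg (norm_nonneg (u n)) 2]
    have he : (Complex.exp (u n) - 1) / (u n) - 1
        = (Complex.exp (u n) - (1 + u n)) / (u n) := by
      field_simp
      ring
    have hpos : (0:ℝ) < ‖u n‖ := by
      rw [norm_pos_iff]; exact h1
    rw [he, norm_div, Real.norm_eq_abs, _root_.abs_of_nonneg (by positivity), div_le_iff₀ hpos]
    calc ‖Complex.exp (u n) - (1 + u n)‖ ≤ ‖u n‖ ^ 2 := hb'
      _ = ‖u n‖ * ‖u n‖ := by
          ring
  have hD : Tendsto (fun n => (u n) / (Complex.exp (u n) - 1)) atTop (𝓝 1) := by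
    have := hM.inv₀ one_ne_zero
    rw [inv_one] at this
    refine this.congr fun n => ?_
    rw [inv_div]
  have hfinal := hN.mul hD
  rw [(by norm_num : (1/2 : ℂ) * 1 = 1/2)] at hfinal
  refine hfinal.congr' ?_
  filter_upwards [hune, hexp, hwne] with n h1 h2 h3
  show (Complex.exp (u n) - 1 - u n) / (u n)^2 * ((u n) / (Complex.exp (u n) - 1))
      = (u n)⁻¹ + (1 - w n)⁻¹
  rw [← h2]
  have hden : Complex.exp (u n) - 1 ≠ 0 := by
    rw [h2]; exact sub_ne_zero.2 (hw1 n)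
  have : (1 - Complex.exp (u n)) = -(Complex.exp (u n) - 1) := by ring
  rw [this, inv_neg]
  field_simp
  ring


/-- if `f_n → f` uniformly, `f` has a non-degenerate parabolic fixed point
`0` of multiplier `1` and multiplicity `q+1`, and `f_n` has fixed points `0` (multiplier
`λ_n^q ≠ 1`) and a `q`-cycle `{p_{n,j}}` of multiplier `μ_n` converging to `0`, then
`1/Log(λ_n^q) + q/Log(μ_n) → résit(f,0) = (q+1)/2 - ι(f,0)`. -/
theorem sum_inv_log_multipliers_tendsto_resit
    (q : ℕ) (hq : 1 ≤ q) (r₀ : ℝ) (hr₀ : 0 < r₀)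
    (f : ℂ → ℂ) (fn : ℕ → ℂ → ℂ) (lam mu : ℕ → ℂ) (p : ℕ → Fin q → ℂ) (a ι : ℂ)
    (hf : DifferentiableOn ℂ f (closedBall 0 r₀))
    (hfn : ∀ n, DifferentiableOn ℂ (fn n) (closedBall 0 r₀))
    (hconv : TendstoUniformlyOn fn f atTop (closedBall 0 r₀))
    (ha : a ≠ 0)
    (hpar : (fun z => f z - z - a * z^(q+1)) =O[𝓝 0] fun z => z^(q+2))
    (hfix : ∀ z ∈ closedBall (0:ℂ) r₀, f z = z ↔ z = 0)
    (hfixn : ∀ n, ∀ z ∈ closedBall (0:ℂ) r₀, fn n z = z ↔ (z = 0 ∨ ∃ j, z = p n j))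
    (hpinj : ∀ n, Function.Injective (p n))
    (hpne : ∀ n j, p n j ≠ 0)
    (hpto : ∀ j, Tendsto (fun n => p n j) atTop (𝓝 0))
    (hlam : ∀ n, deriv (fn n) 0 = (lam n)^q) (hlamne : ∀ n, (lam n)^q ≠ 1)
    (hmu : ∀ n j, deriv (fn n) (p n j) = mu n) (hmune : ∀ n, mu n ≠ 1)
    (hres : ∀ᶠ r in 𝓝[>] (0:ℝ),
      (2 * Real.pi * Complex.I : ℂ)⁻¹ • (∮ z in C(0, r), (z - f z)⁻¹) = ι) :
    Tendsto (fun n => (Complex.log ((lam n)^q))⁻¹ + (q : ℂ) * (Complex.log (mu n))⁻¹)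
      atTop (𝓝 (((q : ℂ) + 1)/2 - ι)) := by
  -- choose a radius r
  obtain ⟨r, hres_r, hr_pos, hr_lt⟩ :
      ∃ r : ℝ, ((2 * Real.pi * Complex.I : ℂ)⁻¹ • (∮ z in C(0, r), (z - f z)⁻¹) = ι)
        ∧ 0 < r ∧ r < r₀ := by
    have h1 : Ioo (0:ℝ) r₀ ∈ 𝓝[>] (0:ℝ) := Ioo_mem_nhdsGT_of_mem ⟨le_refl 0, hr₀⟩
    obtain ⟨r, h2, h3⟩ := (hres.and h1).exists
    exact ⟨r, h2, h3.1, h3.2⟩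
  have hsub : sphere (0:ℂ) r ⊆ closedBall (0:ℂ) r₀ :=
    (sphere_subset_closedBall).trans (closedBall_subset_closedBall hr_lt.le)
  have hsub2 : sphere (0:ℂ) r ⊆ ball (0:ℂ) r₀ := fun z hz => by
    rw [mem_sphere_zero_iff_norm] at hz
    exact mem_ball_zero_iff.2 (hz ▸ hr_lt)
  -- lower bound on ‖z - f z‖ on the circle
  have hfc : ContinuousOn (fun z => ‖z - f z‖) (sphere (0:ℂ) r) :=
    (continuousOn_id.sub (hf.continuousOn.mono hsub)).norm
  obtain ⟨z₀, hz₀, hmin⟩ := (isCompact_sphere (0:ℂ) r).exists_isMinOn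
    (NormedSpace.sphere_nonempty.2 hr_pos.le) hfc
  set ε : ℝ := ‖z₀ - f z₀‖ with hε_def
  have hε : 0 < ε := by
    rw [hε_def, norm_pos_iff, sub_ne_zero]
    intro h
    have h0 : z₀ = 0 := (hfix z₀ (hsub hz₀)).1 h.symm
    rw [mem_sphere_zero_iff_norm, h0] at hz₀
    simp at hz₀
    exact hr_pos.ne' hz₀.symm
  have hminz : ∀ z ∈ sphere (0:ℂ) r, ε ≤ ‖z - f z‖ := fun z hz => hmin hz
  -- differentiability of fn at interior points
  have hfnat : ∀ n, ∀ z ∈ ball (0:ℂ) r₀, DifferentiableAt ℂ (fn n) z := fun n z hz =>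
    (hfn n).differentiableAt (mem_of_superset (isOpen_ball.mem_nhds hz) ball_subset_closedBall)
  -- Step 2: residue computation, eventually in n
  have hEn : ∀ᶠ n in atTop, (2 * Real.pi * Complex.I : ℂ)⁻¹ • (∮ z in C(0, r), (z - fn n z)⁻¹)
      = (1 - (lam n)^q)⁻¹ + (q:ℂ) * (1 - mu n)⁻¹ := by
    have hE2 : ∀ᶠ n in atTop, ∀ j, p n j ∈ ball (0:ℂ) r :=
      eventually_all.2 fun j => (hpto j) (isOpen_ball.mem_nhds (mem_ball_self hr_pos))
    filter_upwards [hE2] with n hn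
    set A : ℂ := (1 - (lam n)^q)⁻¹ with hA
    set B : ℂ := (1 - mu n)⁻¹ with hB
    set w : ℂ → ℂ := fun c => if c = 0 then A else B with hw
    set T : Finset ℂ := insert 0 (Finset.image (p n) Finset.univ) with hT
    have hmemT : ∀ c : ℂ, c ∈ T ↔ c = 0 ∨ ∃ j, p n j = c := by
      intro c
      simp [hT]
    have hTsub : ↑T ⊆ ball (0:ℂ) r := by
      intro c hc
      rw [Finset.mem_coe, hmemT] at hc
      rcases hc with rfl | ⟨j, rfl⟩
      · exact mem_ball_self hr_pos
      · exact hn j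
    have hdiff : ∀ z ∈ ball (0:ℂ) r₀ \ ↑T, DifferentiableAt ℂ (fun z => (z - fn n z)⁻¹) z := by
      intro z hz
      have hz0 : z ∈ closedBall (0:ℂ) r₀ := ball_subset_closedBall hz.1
      have hne : fn n z ≠ z := by
        intro h
        apply hz.2
        rw [Finset.mem_coe, hmemT]
        rcases (hfixn n z hz0).1 h with h' | ⟨j, h'⟩
        · exact Or.inl h'
        · exact Or.inr ⟨j, h'.symm⟩
      exact (differentiableAt_id.sub (hfnat n z hz.1)).inv
        (sub_ne_zero.2 (fun h => hne h.symm))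
    have hpole : ∀ c ∈ T, ∃ L, Tendsto (fun z => (z - fn n z)⁻¹ - w c * (z - c)⁻¹)
        (𝓝[≠] c) (𝓝 L) := by
      intro c hc
      have hdall : DifferentiableOn ℂ (fun z => z - fn n z) (ball (0:ℂ) r₀) :=
        differentiableOn_id.sub ((hfn n).mono ball_subset_closedBall)
      have hcball : c ∈ ball (0:ℂ) r₀ := ball_subset_ball hr_lt.le (hTsub hc)
      have hderiv : deriv (fun z => z - fn n z) c = 1 - deriv (fn n) c :=
        ((hasDerivAt_id c).sub ((hfnat n c hcball).hasDerivAt)).deriv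
      rw [hmemT] at hc
      rcases hc with rfl | ⟨j, rfl⟩
      · have h0 : (fun z => z - fn n z) 0 = 0 := by
          have : fn n 0 = 0 := (hfixn n 0 (mem_closedBall_self hr₀.le)).2 (Or.inl rfl)
          simp [this]
        have hd0 : deriv (fun z => z - fn n z) 0 ≠ 0 := by
          rw [hderiv, hlam n]
          exact sub_ne_zero.2 (Ne.symm (hlamne n))
        obtain ⟨L, hL⟩ := pole_sub_inv_tendsto isOpen_ball hcball hdall h0 hd0
        refine ⟨L, ?_⟩
        have hwc : w 0 = (deriv (fun z => z - fn n z) 0)⁻¹ := by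
          rw [hderiv, hlam n, hw]
          simp [hA]
        rw [hwc]
        exact hL
      · have h0 : (fun z => z - fn n z) (p n j) = 0 := by
          have : fn n (p n j) = (p n j) :=
            (hfixn n (p n j) (ball_subset_closedBall hcball)).2 (Or.inr ⟨j, rfl⟩)
          simp [this]
        have hd0 : deriv (fun z => z - fn n z) (p n j) ≠ 0 := by
          rw [hderiv, hmu n j]
          exact sub_ne_zero.2 (Ne.symm (hmune n))
        obtain ⟨L, hL⟩ := pole_sub_inv_tendsto isOpen_ball hcball hdall h0 hd0
        refine ⟨L, ?_⟩
        have hwc : w (p n j) = (deriv (fun z => z - fn n z) (p n j))⁻¹ := by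
          rw [hderiv, hmu n j, hw]
          simp [hB, if_neg (hpne n j)]
        rw [hwc]
        exact hL
    have hres_n := residue_sum r₀ r hr_pos hr_lt T (fun z => (z - fn n z)⁻¹) w hTsub hdiff hpole
    have h0notin : (0:ℂ) ∉ Finset.image (p n) Finset.univ := by
      simp only [Finset.mem_image, Finset.mem_univ, true_and, not_exists]
      exact fun j => hpne n j
    have hsum : ∑ c ∈ T, w c = A + (q:ℂ) * B := by
      rw [hT, Finset.sum_insert h0notin]
      have h1 : w 0 = A := if_pos rfl
      have h2 : ∑ c ∈ Finset.image (p n) Finset.univ, w c = ∑ j : Fin q, w (p n j) :=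
        Finset.sum_image (fun x _ y _ h => hpinj n h)
      rw [h1, h2]
      have h3 : ∀ j : Fin q, w (p n j) = B := fun j => if_neg (hpne n j)
      rw [Finset.sum_congr rfl (fun j _ => h3 j), Finset.sum_const, Finset.card_univ,
        Fintype.card_fin, nsmul_eq_mul]
    rw [hres_n, hsum, smul_eq_mul, inv_mul_cancel_left₀ Complex.two_pi_I_ne_zero]
  -- Step 3: convergence of the circle integrals
  have hintconv : Tendsto (fun n => ∮ z in C(0, r), (z - fn n z)⁻¹) atTop
      (𝓝 (∮ z in C(0, r), (z - f z)⁻¹)) := by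
    have hE1 : ∀ᶠ n in atTop, ∀ z ∈ closedBall (0:ℂ) r₀, dist (f z) (fn n z) < ε/2 :=
      (Metric.tendstoUniformlyOn_iff.1 hconv) (ε/2) (by positivity)
    have hlow : ∀ᶠ n in atTop, ∀ z ∈ sphere (0:ℂ) r, ε/2 ≤ ‖z - fn n z‖ := by
      filter_upwards [hE1] with n h1 z hz
      have h2 : ‖f z - fn n z‖ < ε/2 := by
        rw [← dist_eq_norm]
        exact h1 z (hsub hz)
      have h3 : ε ≤ ‖z - f z‖ := hminz z hz
      have h4 : ‖z - f z‖ ≤ ‖z - fn n z‖ + ‖fn n z - f z‖ := by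
        calc ‖z - f z‖ = ‖(z - fn n z) + (fn n z - f z)‖ := by ring_nf
          _ ≤ ‖z - fn n z‖ + ‖fn n z - f z‖ := norm_add_le _ _
      rw [norm_sub_rev] at h2
      linarith
    show Tendsto (fun n => ∮ z in C(0, r), (z - fn n z)⁻¹) atTop
      (𝓝 (∮ z in C(0, r), (z - f z)⁻¹))
    rw [circleIntegral]
    simp only [circleIntegral]
    refine intervalIntegral.tendsto_integral_filter_of_dominated_convergence
      (fun _ => r * (2/ε)) ?_ ?_ ?_ ?_
    · filter_upwards [hlow] with n hn
      refine Continuous.aestronglyMeasurable ?_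
      have hc1 : Continuous fun θ : ℝ => circleMap 0 r θ - fn n (circleMap 0 r θ) := by
        refine continuous_iff_continuousAt.2 fun θ => ?_
        exact (continuous_circleMap 0 r).continuousAt.sub
          (((hfnat n _ (hsub2 (circleMap_mem_sphere 0 hr_pos.le θ))).continuousAt).comp
            (continuous_circleMap 0 r).continuousAt)
      have hc2 : Continuous fun θ : ℝ => (circleMap 0 r θ - fn n (circleMap 0 r θ))⁻¹ := by
        refine continuous_iff_continuousAt.2 fun θ => ?_
        refine (hc1.continuousAt).inv₀ ?_
        have := hn _ (circleMap_mem_sphere 0 hr_pos.le θ)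
        intro h
        rw [h] at this
        simp at this
        linarith
      simp only [deriv_circleMap]
      exact ((continuous_circleMap 0 r).mul continuous_const).smul hc2
    · filter_upwards [hlow] with n hn
      refine Filter.Eventually.of_forall fun θ _ => ?_
      have hz := circleMap_mem_sphere 0 hr_pos.le θ
      rw [norm_smul]
      have hd : ‖deriv (circleMap 0 r) θ‖ = r := by
        rw [deriv_circleMap, norm_mul]
        simp [norm_circleMap_zero, _root_.abs_of_nonneg hr_pos.le]
      rw [hd]
      have h1 : ‖(circleMap 0 r θ - fn n (circleMap 0 r θ))⁻¹‖ ≤ 2/ε := by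
        rw [norm_inv]
        rw [inv_le_comm₀ (lt_of_lt_of_le (by positivity) (hn _ hz)) (by positivity)]
        calc (2/ε)⁻¹ = ε/2 := by field_simp
          _ ≤ ‖circleMap 0 r θ - fn n (circleMap 0 r θ)‖ := hn _ hz
      calc r * ‖(circleMap 0 r θ - fn n (circleMap 0 r θ))⁻¹‖ ≤ r * (2/ε) := by
            exact mul_le_mul_of_nonneg_left h1 hr_pos.le
        _ = r * (2/ε) := rfl
    · exact intervalIntegrable_const
    · refine Filter.Eventually.of_forall fun θ _ => ?_
      have hz := circleMap_mem_sphere 0 hr_pos.le θ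
      refine Tendsto.const_smul ?_ _
      have h1 : Tendsto (fun n => fn n (circleMap 0 r θ)) atTop (𝓝 (f (circleMap 0 r θ))) :=
        hconv.tendsto_at (hsub hz)
      have h2 : circleMap 0 r θ - f (circleMap 0 r θ) ≠ 0 := by
        intro h
        have := hminz _ hz
        rw [h] at this
        simp at this
        linarith
      exact (tendsto_const_nhds.sub h1).inv₀ h2
  -- Step 3': sum of indices tends to ι
  have hS : Tendsto (fun n => (1 - (lam n)^q)⁻¹ + (q:ℂ) * (1 - mu n)⁻¹) atTop (𝓝 ι) := by
    have h1 : Tendsto (fun n => (2 * Real.pi * Complex.I : ℂ)⁻¹ •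
        (∮ z in C(0, r), (z - fn n z)⁻¹)) atTop
        (𝓝 ((2 * Real.pi * Complex.I : ℂ)⁻¹ • (∮ z in C(0, r), (z - f z)⁻¹))) :=
      hintconv.const_smul _
    rw [hres_r] at h1
    exact h1.congr' hEn
  -- Step 4: multipliers tend to 1
  have hf0 : f 0 = 0 := (hfix 0 (mem_closedBall_self hr₀.le)).2 rfl
  have hder1 : deriv f 0 = 1 := by
    have hpow : ∀ k : ℕ, 1 ≤ k → (fun z : ℂ => z^(k+1)) =o[𝓝 0] (fun z : ℂ => z) := by
      intro k hk
      rw [isLittleO_iff_tendsto (fun x hx => by rw [hx]; exact zero_pow (Nat.succ_ne_zero k))]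
      have h1 : Tendsto (fun x : ℂ => x^k) (𝓝 0) (𝓝 0) := by
        have := (continuous_pow k).tendsto (0:ℂ)
        rwa [zero_pow (by omega : k ≠ 0)] at this
      refine h1.congr fun x => ?_
      rcases eq_or_ne x 0 with rfl | hx
      · simp [zero_pow (by omega : k ≠ 0)]
      · rw [pow_succ, mul_div_cancel_right₀ _ hx]
    have hA : (fun z : ℂ => f z - z - a * z^(q+1)) =o[𝓝 0] (fun z : ℂ => z) :=
      hpar.trans_isLittleO (hpow (q+1) (by omega))
    have hB : (fun z : ℂ => a * z^(q+1)) =o[𝓝 0] (fun z : ℂ => z) :=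
      (hpow q hq).const_mul_left a
    have hlo : (fun z : ℂ => f z - z) =o[𝓝 0] (fun z : ℂ => z) := by
      have := hA.add hB
      refine this.congr' ?_ (by rfl)
      refine Filter.Eventually.of_forall fun z => ?_
      ring
    have hder : HasDerivAt f 1 0 := by
      rw [hasDerivAt_iff_isLittleO]
      simpa [hf0] using hlo
    exact hder.deriv
  have hballconv : TendstoLocallyUniformlyOn fn f atTop (ball (0:ℂ) r₀) :=
    hconv.tendstoLocallyUniformlyOn.mono ball_subset_closedBall
  have hdconv : TendstoLocallyUniformlyOn (deriv ∘ fn) (deriv f) atTop (ball (0:ℂ) r₀) :=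
    hballconv.deriv (Filter.Eventually.of_forall fun n => (hfn n).mono ball_subset_closedBall)
      isOpen_ball
  have hlam1 : Tendsto (fun n => (lam n)^q) atTop (𝓝 1) := by
    have h1 := hdconv.tendsto_at (mem_ball_self hr₀)
    rw [hder1] at h1
    refine h1.congr fun n => ?_
    exact (hlam n)
  have hmu1 : Tendsto mu atTop (𝓝 1) := by
    have j₀ : Fin q := ⟨0, hq⟩
    have hfa : AnalyticOnNhd ℂ f (ball (0:ℂ) r₀) :=
      (hf.mono ball_subset_closedBall).analyticOnNhd isOpen_ball
    have hcont : ContinuousWithinAt (deriv f) (ball (0:ℂ) r₀) 0 :=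
      (hfa.deriv.continuousOn).continuousWithinAt (mem_ball_self hr₀)
    have hg : Tendsto (fun n => p n j₀) atTop (𝓝[ball (0:ℂ) r₀] 0) := by
      rw [tendsto_nhdsWithin_iff]
      exact ⟨hpto j₀, (hpto j₀) (isOpen_ball.mem_nhds (mem_ball_self hr₀))⟩
    have h1 := hdconv.tendsto_comp hcont (mem_ball_self hr₀) hg
    rw [hder1] at h1
    refine h1.congr fun n => ?_
    exact (hmu n j₀)
  -- Step 5: log asymptotics
  have hE1lim := log_asym hlam1 hlamne
  have hE2lim := log_asym hmu1 hmune
  -- final assembly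
  have hfinal := (hE1lim.add (hE2lim.const_mul (q:ℂ))).sub hS
  have heq : (1/2 : ℂ) + (q:ℂ) * (1/2) - ι = ((q:ℂ)+1)/2 - ι := by ring
  rw [heq] at hfinal
  refine hfinal.congr fun n => ?_
  ring
end

section
/- Suppose for each n the map f_n is holomorphic near 0 of the form f_n(z) = λ_n^q z + δ_n Σ_{j=2}^q Ã_{n,j} z^j + A_{n,q+1} z^{q+1} + O(z^{q+2}), where δ_n = 1 − λ_n^q → 0, the coefficients Ã_{n,j} are uniformly bounded, A_{n,q+1} → 1, and the O(z^{q+2}) bound is uniform in n. If p_n ≠ 0 is a fixed point of f_n with p_n → 0, then p_n^q = δ_n + o(δ_n) as n → ∞. -/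
/-!
Dividing the fixed-point equation `f_n(p_n) = p_n` by `p_n` gives
`δ_n = δ_n s_n + A_{n,q+1} p_n^q + e_n` with `s_n = Σ Ã_{n,j} p_n^{j-1} → 0` and
`e_n = O(p_n^{q+1}) = o(p_n^q)`. Since `A_{n,q+1} → 1`, the right-hand side is `p_n^q (1 + o(1))`
while the left-hand side is `δ_n (1 + o(1))`; hence `p_n^q = O(δ_n)`, and then every error term in
`p_n^q - δ_n = (1 - A_{n,q+1}) p_n^q - δ_n s_n - e_n` is `o(δ_n)`.
-/

open Complex Metric Filter Topology Set Asymptotics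

section Asymptotics

variable {α 𝕜 : Type*} [NormedField 𝕜] {l : Filter α}

theorem isBigO_of_eq_mul_add {δ u s e A : α → 𝕜} (hA : Tendsto A l (𝓝 1))
    (hs : Tendsto s l (𝓝 0)) (he : e =o[l] u)
    (h : ∀ᶠ x in l, δ x = δ x * s x + A x * u x + e x) : u =O[l] δ := by
  have hA1 : (fun x => A x - 1) =o[l] fun _ => (1 : 𝕜) :=
    (isLittleO_one_iff 𝕜).2 (by simpa using hA.sub_const 1)
  have hsmall : (fun x => (A x - 1) * u x + e x) =o[l] u := by
    have hAu : (fun x => (A x - 1) * u x) =o[l] u := by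
      simpa using hA1.mul_isBigO (isBigO_refl u l)
    exact hAu.add he
  have hδ : (fun x => δ x * (1 - s x)) =O[l] δ := by
    simpa using (isBigO_refl δ l).mul ((tendsto_const_nhds.sub hs).isBigO_one 𝕜)
  refine hsmall.right_isBigO_add.trans (hδ.congr' ?_ EventuallyEq.rfl)
  filter_upwards [h] with x hx
  linear_combination hx

theorem isLittleO_sub_of_eq_mul_add {δ u s e A : α → 𝕜} (hA : Tendsto A l (𝓝 1))
    (hs : Tendsto s l (𝓝 0)) (he : e =o[l] u)
    (h : ∀ᶠ x in l, δ x = δ x * s x + A x * u x + e x) :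
    (fun x => u x - δ x) =o[l] δ := by
  have hu : u =O[l] δ := isBigO_of_eq_mul_add hA hs he h
  have h1A : (fun x => 1 - A x) =o[l] fun _ => (1 : 𝕜) :=
    (isLittleO_one_iff 𝕜).2 (by simpa using (tendsto_const_nhds (x := (1 : 𝕜))).sub hA)
  have hs' : s =o[l] fun _ => (1 : 𝕜) := (isLittleO_one_iff 𝕜).2 hs
  have hsum : (fun x => (1 - A x) * u x - δ x * s x - e x) =o[l] δ := by
    refine ((?_ : _ =o[l] δ).sub ?_).sub (he.trans_isBigO hu)
    · simpa using h1A.mul_isBigO hu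
    · simpa using (isBigO_refl δ l).mul_isLittleO hs'
  refine hsum.congr' ?_ EventuallyEq.rfl
  filter_upwards [h] with x hx
  linear_combination hx

theorem tendsto_sum_mul_pow_zero {ι : Type*} {t : Finset ι} {c : α → ι → 𝕜} {z : α → 𝕜}
    {k : ι → ℕ} {B : ℝ} (hc : ∀ x, ∀ i ∈ t, ‖c x i‖ ≤ B) (hk : ∀ i ∈ t, k i ≠ 0)
    (hz : Tendsto z l (𝓝 0)) : Tendsto (fun x => ∑ i ∈ t, c x i * z x ^ k i) l (𝓝 0) := by
  rw [← Finset.sum_const_zero (s := t)]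
  refine tendsto_finsetSum t fun i hi => ?_
  have hci : (fun x => c x i) =O[l] fun _ => (1 : 𝕜) :=
    IsBigO.of_bound B (Eventually.of_forall fun x => by simpa using hc x i hi)
  have hzi : (fun x => z x ^ k i) =o[l] fun _ => (1 : 𝕜) :=
    (isLittleO_one_iff 𝕜).2 (by simpa [zero_pow (hk i hi)] using hz.pow (k i))
  exact (isLittleO_one_iff 𝕜).1 (by simpa using hci.mul_isLittleO hzi)

theorem isLittleO_div_of_norm_le_pow {R z : α → 𝕜} {C : ℝ} {m : ℕ}
    (hR : ∀ᶠ x in l, ‖R x‖ ≤ C * ‖z x‖ ^ (m + 2)) (hz : Tendsto z l (𝓝 0)) :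
    (fun x => R x / z x) =o[l] fun x => z x ^ m := by
  have hbound : (fun x => R x / z x) =O[l] fun x => z x * z x ^ m := by
    refine IsBigO.of_bound C ?_
    filter_upwards [hR] with x hx
    rcases eq_or_ne (z x) 0 with hzx | hzx
    · simp [hzx]
    · rw [norm_div, div_le_iff₀ (norm_pos_iff.2 hzx), norm_mul, norm_pow]
      calc ‖R x‖ ≤ C * ‖z x‖ ^ (m + 2) := hx
        _ = C * (‖z x‖ * ‖z x‖ ^ m) * ‖z x‖ := by ring
  have hz' : z =o[l] fun _ => (1 : 𝕜) := (isLittleO_one_iff 𝕜).2 hz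
  exact hbound.trans_isLittleO (by simpa using hz'.mul_isBigO (isBigO_refl (fun x => z x ^ m) l))

end Asymptotics

theorem sum_Icc_two_mul_pow_eq_mul {S : Type*} [CommSemiring S] {q : ℕ} (a : ℕ → S) (z : S) :
    ∑ j ∈ Finset.Icc 2 q, a j * z ^ j = z * ∑ j ∈ Finset.Icc 2 q, a j * z ^ (j - 1) := by
  rw [Finset.mul_sum]
  refine Finset.sum_congr rfl fun j hj => ?_
  obtain ⟨k, rfl⟩ : ∃ k, j = k + 1 := ⟨j - 1, by have := (Finset.mem_Icc.1 hj).1; omega⟩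
  rw [Nat.add_sub_cancel, pow_succ']
  ring

theorem bifurcated_cycle_asymptotics_general
    (q : ℕ) (lam : ℕ → ℂ) (fn : ℕ → ℂ → ℂ)
    (At : ℕ → ℕ → ℂ) (Aq : ℕ → ℂ) (p : ℕ → ℂ) (r C B : ℝ) (hr : 0 < r)
    (hbound : ∀ n, ∀ j, 2 ≤ j → j ≤ q → ‖At n j‖ ≤ B)
    (hAq : Tendsto Aq atTop (𝓝 1))
    (hrem : ∀ n, ∀ z ∈ ball (0:ℂ) r,
      ‖fn n z - ((lam n)^q * z
        + (1 - (lam n)^q) * (∑ j ∈ Finset.Icc 2 q, At n j * z^j)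
        + Aq n * z^(q+1))‖ ≤ C * ‖z‖ ^ (q+2))
    (hfix : ∀ n, fn n (p n) = p n) (hpne : ∀ n, p n ≠ 0)
    (hpto : Tendsto p atTop (𝓝 0)) :
    (fun n => (p n)^q - (1 - (lam n)^q)) =o[atTop] fun n => 1 - (lam n)^q := by
  set R : ℕ → ℂ := fun n => fn n (p n) - ((lam n)^q * p n
    + (1 - (lam n)^q) * (∑ j ∈ Finset.Icc 2 q, At n j * p n ^ j) + Aq n * p n ^ (q+1))
  have hs : Tendsto (fun n => ∑ j ∈ Finset.Icc 2 q, At n j * p n ^ (j - 1)) atTop (𝓝 0) :=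
    tendsto_sum_mul_pow_zero
      (fun n j hj => hbound n j (Finset.mem_Icc.1 hj).1 (Finset.mem_Icc.1 hj).2)
      (fun j hj => by have := (Finset.mem_Icc.1 hj).1; omega) hpto
  have he : (fun n => R n / p n) =o[atTop] fun n => p n ^ q := by
    refine isLittleO_div_of_norm_le_pow (C := C) ?_ hpto
    filter_upwards [hpto.eventually (ball_mem_nhds 0 hr)] with n hn using hrem n (p n) hn
  refine isLittleO_sub_of_eq_mul_add hAq hs he (Eventually.of_forall fun n => ?_)
  simp only [R, hfix n, sum_Icc_two_mul_pow_eq_mul (At n) (p n)]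
  field_simp [hpne n]
  ring

/-- for perturbations `f_n(z) = λ_n^q z + δ_n Σ_{j=2}^q Ã_{n,j} z^j
+ A_{n,q+1} z^(q+1) + O(z^(q+2))` with `δ_n = 1 - λ_n^q → 0`, uniformly bounded `Ã_{n,j}`,
`A_{n,q+1} → 1`, and uniform remainder, any nonzero fixed points `p_n → 0` of `f_n`
satisfy `p_n^q = δ_n + o(δ_n)`. -/
theorem bifurcated_cycle_asymptotics
    (q : ℕ) (hq : 1 ≤ q) (lam : ℕ → ℂ) (fn : ℕ → ℂ → ℂ)
    (At : ℕ → ℕ → ℂ) (Aq : ℕ → ℂ) (p : ℕ → ℂ) (r C B : ℝ) (hr : 0 < r)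
    (hδ : Tendsto (fun n => 1 - (lam n)^q) atTop (𝓝 0))
    (hδne : ∀ n, (lam n)^q ≠ 1)
    (hbound : ∀ n, ∀ j, 2 ≤ j → j ≤ q → ‖At n j‖ ≤ B)
    (hAq : Tendsto Aq atTop (𝓝 1))
    (hrem : ∀ n, ∀ z ∈ ball (0:ℂ) r,
      ‖fn n z - ((lam n)^q * z
        + (1 - (lam n)^q) * (∑ j ∈ Finset.Icc 2 q, At n j * z^j)
        + Aq n * z^(q+1))‖ ≤ C * ‖z‖ ^ (q+2))
    (hfix : ∀ n, fn n (p n) = p n) (hpne : ∀ n, p n ≠ 0)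
    (hpto : Tendsto p atTop (𝓝 0)) :
    (fun n => (p n)^q - (1 - (lam n)^q)) =o[atTop] fun n => 1 - (lam n)^q :=
  bifurcated_cycle_asymptotics_general q lam fn At Aq p r C B hr hbound hAq hrem hfix hpne hpto
end

section
/- Let ω(z) = z^{−(q+1)} + ρ/z + e(z) with e holomorphic near 0, and consider the curve Z(θ) = φ(r e^{iθ}) where φ is a primitive of ω along the circle |z| = r. For all sufficiently small r > 0, the Euclidean curvature κ of Z satisfies κ = −q r^q (1 + O(r^q)), so in particular κ < −(q/2) r^q. -/
/-!
Write `ω(z) = D(z) / z^(q+1)` with `D(z) = 1 + z^q g(z)`, `g(z) = ρ + z e(z)` holomorphic at `0`.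
Then `1 + zω'/ω = zD'/D - q` and `|zω| = |D| / r^q`, so
`κ + q r^q = r^q (Re(zD'/D) + q(|D| - 1)) / |D|`.
Both `D - 1` and `zD'` are `O(r^q)` and `|D| → 1`, hence `κ + q r^q = O(r^(2q))`.
-/

open Complex Metric Filter Topology Set Asymptotics

/-- The curvature at `φ z` of the curve `θ ↦ φ (|z| e^{iθ})`, where `φ' = ω`. -/
noncomputable def circleImageCurvature (ω : ℂ → ℂ) (z : ℂ) : ℝ :=
  ‖z * ω z‖⁻¹ * (1 + z * logDeriv ω z).re

theorem one_add_mul_logDeriv_eq {ω D : ℂ → ℂ} {z : ℂ} {n : ℕ} (hz : z ≠ 0)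
    (hD : DifferentiableAt ℂ D z) (hDz : D z ≠ 0) (hω : ω =ᶠ[𝓝 z] fun w ↦ D w / w ^ (n + 1)) :
    1 + z * logDeriv ω z = z * logDeriv D z - n := by
  rw [(logDeriv_congr_nhds hω).eq_of_nhds,
    logDeriv_div (g := (· ^ (n + 1))) z hDz (pow_ne_zero _ hz) hD (differentiableAt_pow _),
    logDeriv_pow]
  push_cast
  field_simp
  ring

theorem circleImageCurvature_eq {ω D : ℂ → ℂ} {z : ℂ} {n : ℕ} (hz : z ≠ 0)
    (hD : DifferentiableAt ℂ D z) (hDz : D z ≠ 0) (hω : ω =ᶠ[𝓝 z] fun w ↦ D w / w ^ (n + 1)) :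
    circleImageCurvature ω z = ‖z‖ ^ n / ‖D z‖ * ((z * logDeriv D z).re - n) := by
  have hzω : z * ω z = D z / z ^ n := by
    rw [hω.eq_of_nhds]; field_simp; ring
  rw [circleImageCurvature, one_add_mul_logDeriv_eq hz hD hDz hω, hzω, norm_div, norm_pow, inv_div]
  simp

theorem abs_div_norm_mul_sub_add_le {d t : ℂ} {q s : ℝ} (hq : 0 ≤ q) (hs : 0 ≤ s)
    (hd : ‖d - 1‖ ≤ 1 / 2) :
    |s / ‖d‖ * ((t / d).re - q) + q * s| ≤ 2 * s * (2 * ‖t‖ + q * ‖d - 1‖) := by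
  have hd_ge : 1 / 2 ≤ ‖d‖ := by
    have := norm_sub_norm_le 1 (1 - d)
    rw [sub_sub_cancel, norm_one, norm_sub_rev] at this
    linarith
  have hd_pos : 0 < ‖d‖ := by linarith
  have hre : |(t / d).re| ≤ 2 * ‖t‖ := by
    calc |(t / d).re| ≤ ‖t / d‖ := abs_re_le_norm _
      _ = ‖t‖ / ‖d‖ := norm_div _ _
      _ ≤ ‖t‖ / (1 / 2) := by gcongr
      _ = 2 * ‖t‖ := by ring
  have hnorm : |‖d‖ - 1| ≤ ‖d - 1‖ := by simpa using abs_norm_sub_norm_le d 1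
  calc |s / ‖d‖ * ((t / d).re - q) + q * s|
      = s / ‖d‖ * |(t / d).re + q * (‖d‖ - 1)| := by
        rw [← abs_of_nonneg (by positivity : 0 ≤ s / ‖d‖), ← abs_mul,
          abs_of_nonneg (by positivity : 0 ≤ s / ‖d‖)]
        congr 1
        field_simp
        ring
    _ ≤ 2 * s * (2 * ‖t‖ + q * ‖d - 1‖) := by
        gcongr
        · rw [div_le_iff₀ hd_pos]; nlinarith
        · calc |(t / d).re + q * (‖d‖ - 1)| ≤ |(t / d).re| + |q * (‖d‖ - 1)| := abs_add_le _ _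
            _ ≤ 2 * ‖t‖ + q * ‖d - 1‖ := by
              rw [abs_mul, abs_of_nonneg hq]; gcongr

theorem isBigO_pow_mul {g : ℂ → ℂ} (hg : ContinuousAt g 0) (q : ℕ) :
    (fun z ↦ z ^ q * g z) =O[𝓝 0] fun z ↦ ‖z‖ ^ q := by
  simpa using ((isBigO_refl (fun z : ℂ ↦ z ^ q) _).mul (hg.tendsto.isBigO_one ℂ)).norm_right

theorem mul_deriv_pow_mul {g : ℂ → ℂ} {z : ℂ} {q : ℕ} (hq : 1 ≤ q) (hg : DifferentiableAt ℂ g z) :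
    z * deriv (fun w ↦ w ^ q * g w) z = z ^ q * (q * g z + z * deriv g z) := by
  rw [deriv_fun_mul (differentiableAt_pow q) hg, deriv_pow_field]
  obtain ⟨k, rfl⟩ := Nat.exists_eq_add_of_le' hq
  simp only [Nat.add_sub_cancel]
  push_cast
  ring

theorem tendsto_norm_pow_nhds_zero {q : ℕ} (hq : q ≠ 0) :
    Tendsto (fun z : ℂ ↦ ‖z‖ ^ q) (𝓝 0) (𝓝 0) := by
  have hcont : Continuous fun z : ℂ ↦ ‖z‖ ^ q := by fun_prop
  simpa [hq] using hcont.tendsto 0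

theorem circleImageCurvature_add_isBigO {g ω : ℂ → ℂ} {q : ℕ} (hq : 1 ≤ q)
    (hg : AnalyticAt ℂ g 0) (hω : ∀ z ≠ 0, ω z = (1 + z ^ q * g z) / z ^ (q + 1)) :
    (fun z ↦ circleImageCurvature ω z + q * ‖z‖ ^ q) =O[𝓝[≠] 0] fun z ↦ ‖z‖ ^ (2 * q) := by
  set D : ℂ → ℂ := fun z ↦ 1 + z ^ q * g z
  have hg_near : ∀ᶠ z in 𝓝 0, AnalyticAt ℂ g z := hg.eventually_analyticAt
  have hD_sub : (fun z ↦ D z - 1) =O[𝓝 0] fun z ↦ ‖z‖ ^ q := by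
    simpa [D] using isBigO_pow_mul hg.continuousAt q
  have hD_deriv : (fun z ↦ z * deriv D z) =O[𝓝 0] fun z ↦ ‖z‖ ^ q := by
    have hcont : ContinuousAt (fun z ↦ q * g z + z * deriv g z) 0 :=
      (continuousAt_const.mul hg.continuousAt).add (continuousAt_id.mul hg.deriv.continuousAt)
    refine (isBigO_pow_mul hcont q).congr' ?_ EventuallyEq.rfl
    filter_upwards [hg_near] with z hz
    simp only [D, deriv_const_add, mul_deriv_pow_mul hq hz.differentiableAt]
  have hD_half : ∀ᶠ z in 𝓝 0, ‖D z - 1‖ ≤ 1 / 2 :=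
    (hD_sub.trans_tendsto (tendsto_norm_pow_nhds_zero (by omega))).norm.eventually
      (ge_mem_nhds (by norm_num))
  have hbound : ∀ᶠ z in 𝓝[≠] 0, ‖circleImageCurvature ω z + q * ‖z‖ ^ q‖ ≤
      1 * ‖2 * ‖z‖ ^ q * (2 * ‖z * deriv D z‖ + q * ‖D z - 1‖)‖ := by
    filter_upwards [self_mem_nhdsWithin, nhdsWithin_le_nhds (hg_near.and hD_half)]
      with z (hz : z ≠ 0) ⟨hgz, hDz⟩
    have hD0 : D z ≠ 0 := fun h ↦ by norm_num [h] at hDz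
    have hω_near : ω =ᶠ[𝓝 z] fun w ↦ D w / w ^ (q + 1) := by
      filter_upwards [isOpen_ne.mem_nhds hz] with w hw using hω w hw
    have hDdiff : DifferentiableAt ℂ D z :=
      (differentiableAt_const _).add ((differentiableAt_pow q).mul hgz.differentiableAt)
    rw [circleImageCurvature_eq hz hDdiff hD0 hω_near, logDeriv_apply, ← mul_div_assoc,
      Real.norm_eq_abs, one_mul, Real.norm_of_nonneg (by positivity)]
    exact abs_div_norm_mul_sub_add_le (Nat.cast_nonneg q) (by positivity) hDz
  calc (fun z ↦ circleImageCurvature ω z + q * ‖z‖ ^ q)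
      =O[𝓝[≠] 0] fun z ↦ 2 * ‖z‖ ^ q * (2 * ‖z * deriv D z‖ + q * ‖D z - 1‖) :=
        .of_bound 1 hbound
    _ =O[𝓝[≠] 0] fun z ↦ ‖z‖ ^ q * ‖z‖ ^ q := by
        refine ((isBigO_refl _ _).const_mul_left 2).mul (IsBigO.mono ?_ nhdsWithin_le_nhds)
        exact (hD_deriv.norm_left.const_mul_left 2).add (hD_sub.norm_left.const_mul_left _)
    _ = fun z ↦ ‖z‖ ^ (2 * q) := by simp_rw [two_mul, pow_add]

/-- for `ω(z) = z^{-(q+1)} + ρ/z + e(z)` with `e` holomorphic near `0`, the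
Euclidean curvature `κ(z) = |zω(z)|⁻¹ Re(1 + zω'(z)/ω(z))` of the lift of the circle
`|z| = r` satisfies `κ = -q r^q (1 + O(r^q))`, in particular `κ < -(q/2) r^q` for all
sufficiently small `r`. -/
theorem lifted_circle_curvature
    (q : ℕ) (hq : 1 ≤ q) (ρ : ℂ) (r₀ : ℝ) (hr₀ : 0 < r₀) (e : ℂ → ℂ)
    (he : DifferentiableOn ℂ e (ball 0 r₀))
    (ω : ℂ → ℂ) (hω : ∀ z, ω z = (z^(q+1))⁻¹ + ρ * z⁻¹ + e z)
    (κ : ℂ → ℝ)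
    (hκ : ∀ z, κ z = (‖z * ω z‖)⁻¹ * (1 + z * deriv ω z / ω z).re) :
    ∃ C > 0, ∃ r₁ > 0, r₁ ≤ r₀ ∧ ∀ z : ℂ, z ≠ 0 → ‖z‖ < r₁ →
      |κ z + q * ‖z‖ ^ q| ≤ C * ‖z‖ ^ (2*q) ∧
      κ z < -((q : ℝ)/2) * ‖z‖ ^ q := by
  have hg : AnalyticAt ℂ (fun z ↦ ρ + z * e z) 0 :=
    analyticAt_const.add (analyticAt_id.mul (he.analyticAt (ball_mem_nhds 0 hr₀)))
  have hω' : ∀ z ≠ 0, ω z = (1 + z ^ q * (ρ + z * e z)) / z ^ (q + 1) := fun z hz ↦ by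
    rw [hω]; field_simp; ring
  have hκ' : κ = circleImageCurvature ω := funext fun z ↦ by
    rw [hκ, circleImageCurvature, logDeriv_apply, mul_div_assoc]
  obtain ⟨C, hC, hO⟩ := (circleImageCurvature_add_isBigO hq hg hω').exists_pos
  have hsmall : ∀ᶠ z in 𝓝 (0 : ℂ), C * ‖z‖ ^ q < q / 2 :=
    ((tendsto_norm_pow_nhds_zero (by omega)).const_mul C).eventually
      (gt_mem_nhds (by rw [mul_zero]; exact div_pos (Nat.cast_pos.2 hq) two_pos))
  obtain ⟨ε, hε, hball⟩ :=
    Metric.eventually_nhds_iff.1 ((eventually_nhdsWithin_iff.1 hO.bound).and hsmall)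
  refine ⟨C, hC, min ε r₀, lt_min hε hr₀, min_le_right _ _, fun z hz hzr ↦ ?_⟩
  obtain ⟨hbound, hCz⟩ := hball (by simpa using hzr.trans_le (min_le_left _ _))
  have hbound' : |κ z + q * ‖z‖ ^ q| ≤ C * ‖z‖ ^ (2 * q) := by
    simpa [hκ'] using hbound hz
  refine ⟨hbound', ?_⟩
  rw [mul_comm 2, pow_mul] at hbound'
  nlinarith [(abs_le.1 hbound').2, pow_pos (norm_pos_iff.2 hz) q]
end

section
/- Let F : S → ℂ be a map on a subset S of ℂ satisfying |F(Z) − (Z + 1)| < ε for all Z ∈ S, with 0 < ε < 1. If Z₀ ∈ S and the forward orbit Z_k = F(Z_k−1) stays in S for k = 1,…,N, then each Z_k lies in the cone C⁺_ε(Z₀) = {Z₀ + R e^{iθ} : R > 0, |θ| < arcsin ε}, and Re(Z_k) ≥ Re(Z₀) + k(1 − ε). -/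
open Complex

/-! Each step moves by `1` up to an error `< ε`, so by the triangle inequality `Z k` lies in the
open disc of radius `k ε` about `Z₀ + k`. That disc lies to the right of the line
`Re = Re Z₀ + k (1 - ε)`, and seen from `Z₀` it subtends the half-angle `arcsin ε`. -/

theorem norm_orbit_sub_lt {S : Set ℂ} {F : ℂ → ℂ} {ε : ℝ}
    (hF : ∀ W ∈ S, ‖F W - (W + 1)‖ < ε) {Z : ℕ → ℂ} {N : ℕ}
    (hstep : ∀ k, Z (k + 1) = F (Z k)) (horb : ∀ k < N, Z k ∈ S) :
    ∀ k, 1 ≤ k → k ≤ N → ‖Z k - Z 0 - k‖ < k * ε := by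
  intro k hk
  induction k, hk using Nat.le_induction with
  | base =>
    intro hN
    simpa [hstep 0, sub_sub] using hF (Z 0) (horb 0 (by omega))
  | succ m _ ih =>
    intro hmN
    have hdecomp : Z (m + 1) - Z 0 - (m + 1 : ℕ)
        = (F (Z m) - (Z m + 1)) + (Z m - Z 0 - m) := by
      rw [hstep m]; push_cast; ring
    calc ‖Z (m + 1) - Z 0 - (m + 1 : ℕ)‖
        ≤ ‖F (Z m) - (Z m + 1)‖ + ‖Z m - Z 0 - m‖ := hdecomp ▸ norm_add_le _ _
      _ < ε + m * ε := add_lt_add (hF _ (horb m (by omega))) (ih (by omega))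
      _ = (m + 1 : ℕ) * ε := by push_cast; ring

theorem sub_lt_re_of_norm_sub_ofReal_lt {W : ℂ} {r δ : ℝ} (h : ‖W - r‖ < δ) :
    r - δ < W.re := by
  have := (abs_re_le_norm (W - r)).trans_lt h
  rw [sub_re, ofReal_re] at this
  linarith [neg_abs_le (W.re - r)]

theorem abs_im_lt_mul_norm_of_norm_sub_ofReal_lt {W : ℂ} {r ε : ℝ} (hr : 0 < r) (hε1 : ε < 1)
    (h : ‖W - r‖ < r * ε) : |W.im| < ε * ‖W‖ := by
  have hε0 : 0 < ε := by nlinarith [norm_nonneg (W - r)]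
  have hdisc : (W.re - r) ^ 2 + W.im ^ 2 < (r * ε) ^ 2 := by
    have hsq := Complex.sq_norm (W - r)
    rw [normSq_apply] at hsq
    simp only [sub_re, sub_im, ofReal_re, ofReal_im, sub_zero] at hsq
    nlinarith [norm_nonneg (W - r)]
  -- On the disc, `ε² x² - (1 - ε²) y² > (x - (1 - ε²) r)² ≥ 0`.
  have hcone : W.im ^ 2 < ε ^ 2 * (W.re ^ 2 + W.im ^ 2) := by
    nlinarith [sq_nonneg (W.re - (1 - ε ^ 2) * r), mul_pos (sub_pos.2 hε1) (add_pos hε0 hε0)]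
  have hnorm : ‖W‖ ^ 2 = W.re ^ 2 + W.im ^ 2 := by
    rw [Complex.sq_norm, normSq_apply]; ring
  rw [← hnorm, ← mul_pow, ← sq_abs W.im] at hcone
  exact lt_of_pow_lt_pow_left₀ 2 (by positivity) hcone

theorem re_pos_of_norm_sub_ofReal_lt {W : ℂ} {r ε : ℝ} (hr : 0 < r) (hε1 : ε < 1)
    (h : ‖W - r‖ < r * ε) : 0 < W.re := by
  nlinarith [sub_lt_re_of_norm_sub_ofReal_lt h]

theorem abs_arg_lt_arcsin_of_norm_sub_ofReal_lt {W : ℂ} {r ε : ℝ} (hr : 0 < r) (hε1 : ε < 1)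
    (h : ‖W - r‖ < r * ε) : |arg W| < Real.arcsin ε := by
  have hre : 0 < W.re := re_pos_of_norm_sub_ofReal_lt hr hε1 h
  have hW : 0 < ‖W‖ := norm_pos_iff.2 fun h0 => by simp [h0] at hre
  have hsin : |W.im / ‖W‖| < ε := by
    rw [abs_div, abs_norm, div_lt_iff₀ hW]
    exact abs_im_lt_mul_norm_of_norm_sub_ofReal_lt hr hε1 h
  have hle : |W.im / ‖W‖| ≤ 1 := by
    rw [abs_div, abs_norm, div_le_one hW]
    exact abs_im_le_norm W
  obtain ⟨hlo, hhi⟩ := abs_lt.1 hsin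
  obtain ⟨hlo1, hhi1⟩ := abs_le.1 hle
  rw [arg_of_re_nonneg hre.le, abs_lt, ← Real.arcsin_neg]
  exact ⟨Real.arcsin_lt_arcsin (by linarith) hlo hhi1,
    Real.arcsin_lt_arcsin hlo1 hhi hε1.le⟩

theorem exists_polar_of_norm_sub_ofReal_lt {W : ℂ} {r ε : ℝ} (hr : 0 < r) (hε1 : ε < 1)
    (h : ‖W - r‖ < r * ε) :
    ∃ R θ : ℝ, 0 < R ∧ |θ| < Real.arcsin ε ∧ W = R * exp (I * θ) := by
  have hW : W ≠ 0 := fun h0 => by simpa [h0] using re_pos_of_norm_sub_ofReal_lt hr hε1 h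
  refine ⟨‖W‖, arg W, norm_pos_iff.2 hW, abs_arg_lt_arcsin_of_norm_sub_ofReal_lt hr hε1 h, ?_⟩
  rw [mul_comm I, norm_mul_exp_arg_mul_I]

theorem orbit_in_cone_general
    (S : Set ℂ) (F : ℂ → ℂ) (ε : ℝ) (hε1 : ε < 1)
    (hF : ∀ W ∈ S, ‖F W - (W + 1)‖ < ε)
    (Z : ℕ → ℂ) (N : ℕ) (hstep : ∀ k, Z (k+1) = F (Z k))
    (horb : ∀ k < N, Z k ∈ S) :
    ∀ k, 1 ≤ k → k ≤ N →
      (∃ R θ : ℝ, 0 < R ∧ |θ| < Real.arcsin ε ∧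
        Z k = Z 0 + (R : ℂ) * Complex.exp (Complex.I * (θ : ℂ))) ∧
      (Z 0).re + k * (1 - ε) ≤ (Z k).re := by
  intro k hk1 hkN
  have hdisc : ‖(Z k - Z 0) - k‖ < k * ε := norm_orbit_sub_lt hF hstep horb k hk1 hkN
  refine ⟨?_, ?_⟩
  · obtain ⟨R, θ, hR, hθ, hpolar⟩ :=
      exists_polar_of_norm_sub_ofReal_lt (by exact_mod_cast hk1) hε1 hdisc
    exact ⟨R, θ, hR, hθ, by rw [← hpolar]; ring⟩
  · have := sub_lt_re_of_norm_sub_ofReal_lt hdisc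
    rw [sub_re] at this
    linarith

/-- if `|F(Z) - (Z+1)| < ε` on `S` with `0 < ε < 1`, and the orbit
`Z_{k+1} = F(Z_k)` satisfies `Z_k ∈ S` for `0 ≤ k ≤ N-1`, then for `1 ≤ k ≤ N` the point
`Z_k` lies in the cone `C⁺_ε(Z₀)` and `Re(Z_k) ≥ Re(Z₀) + k(1-ε)`. -/
theorem orbit_in_cone
    (S : Set ℂ) (F : ℂ → ℂ) (ε : ℝ) (hε0 : 0 < ε) (hε1 : ε < 1)
    (hF : ∀ W ∈ S, ‖F W - (W + 1)‖ < ε)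
    (Z : ℕ → ℂ) (N : ℕ) (hstep : ∀ k, Z (k+1) = F (Z k))
    (horb : ∀ k < N, Z k ∈ S) :
    ∀ k, 1 ≤ k → k ≤ N →
      (∃ R θ : ℝ, 0 < R ∧ |θ| < Real.arcsin ε ∧
        Z k = Z 0 + (R : ℂ) * Complex.exp (Complex.I * (θ : ℂ))) ∧
      (Z 0).re + k * (1 - ε) ≤ (Z k).re :=
  orbit_in_cone_general S F ε hε1 hF Z N hstep horb
end
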